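/- arXiv:1104.5218 — 6 statements merged into one kernel-verified Lean document; each statement's English description precedes it below -/
import Mathlib

section
/- Let f : [0,T] → ℝ be γ-Hölder continuous with γ ∈ (0,1]. Then ‖f‖_∞ ≤ 2·max( T^{-1/2}·‖f‖_{L²[0,T]}, ‖f‖_{L²[0,T]}^{2γ/(2γ+1)} · ‖f‖_γ^{1/(2γ+1)} ), where ‖f‖_γ denotes the γ-Hölder seminorm sup_{s≠t} |f(t)-f(s)|/|t-s|^γ. -/
open Set MeasureTheory Real

/-- Interpolation inequality between the sup norm, the `L²` norm and the
`γ`-Hölder seminorm of a function on `[0,T]`: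
`‖f‖_∞ ≤ 2·max( T^{-1/2}·‖f‖_{L²[0,T]}, ‖f‖_{L²}^{2γ/(2γ+1)}·‖f‖_γ^{1/(2γ+1)} )`.
Here `Cγ` is the `γ`-Hölder seminorm bound of `f` on `[0,T]`. -/
theorem stmt0 (T γ Cγ : ℝ) (hT : 0 < T) (hγ0 : 0 < γ) (hγ1 : γ ≤ 1)
    (f : ℝ → ℝ) (hf : ContinuousOn f (Icc 0 T))
    (hHol : ∀ s ∈ Icc (0:ℝ) T, ∀ t ∈ Icc (0:ℝ) T, |f t - f s| ≤ Cγ * |t - s| ^ γ) :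
    ∀ t ∈ Icc (0:ℝ) T,
      |f t| ≤ 2 * max (T ^ (-(1/2) : ℝ) * (∫ s in (0:ℝ)..T, (f s) ^ 2) ^ ((1:ℝ)/2))
        (((∫ s in (0:ℝ)..T, (f s) ^ 2) ^ ((1:ℝ)/2)) ^ (2 * γ / (2 * γ + 1))
          * Cγ ^ (1 / (2 * γ + 1))) := by
  intro t ht
  set M2 := ∫ s in (0:ℝ)..T, (f s) ^ 2 with hM2def
  have hM2 : 0 ≤ M2 := intervalIntegral.integral_nonneg hT.le fun s _ => sq_nonneg _
  set A := |f t| with hAdef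
  have hfirst : 0 ≤ T ^ (-(1/2) : ℝ) * M2 ^ ((1:ℝ)/2) := by positivity
  rcases (abs_nonneg (f t)).eq_or_lt with h0 | hApos
  · rw [show A = 0 from h0.symm]
    have := le_max_left (T ^ (-(1/2) : ℝ) * M2 ^ ((1:ℝ)/2))
      ((M2 ^ ((1:ℝ)/2)) ^ (2 * γ / (2 * γ + 1)) * Cγ ^ (1 / (2 * γ + 1)))
    linarith
  -- Key estimate: on a subinterval of length δ around t, |f| ≥ A/2, hence the L² bound
  have key : ∀ δ : ℝ, 0 < δ → δ ≤ T → Cγ * δ ^ γ ≤ A / 2 → δ * (A / 2) ^ 2 ≤ M2 := by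
    intro δ hδ0 hδT hCδ
    set a := min t (T - δ) with ha
    have ha0 : 0 ≤ a := le_min ht.1 (by linarith)
    have hat : a ≤ t := min_le_left _ _
    have htaδ : t ≤ a + δ := by
      have : t - δ ≤ a := le_min (by linarith) (by linarith [ht.2])
      linarith
    have haδT : a + δ ≤ T := by
      have := min_le_right t (T - δ); linarith
    have hsub : Icc a (a + δ) ⊆ Icc 0 T := Icc_subset_Icc ha0 haδT
    have hlow : ∀ s ∈ Icc a (a + δ), (A / 2) ^ 2 ≤ (f s) ^ 2 := by
      intro s hs
      have hts : |t - s| ≤ δ := abs_le.mpr ⟨by linarith [hs.2], by linarith [hs.1]⟩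
      have h1 : Cγ * |t - s| ^ γ ≤ A / 2 := by
        rcases le_or_gt Cγ 0 with hCle | hCpos
        · have : Cγ * |t - s| ^ γ ≤ 0 :=
            mul_nonpos_of_nonpos_of_nonneg hCle (rpow_nonneg (abs_nonneg _) _)
          linarith
        · calc Cγ * |t - s| ^ γ ≤ Cγ * δ ^ γ := by
                have := Real.rpow_le_rpow (abs_nonneg _) hts hγ0.le
                exact mul_le_mul_of_nonneg_left this hCpos.le
            _ ≤ A / 2 := hCδ
      have h2 : A - |f s| ≤ Cγ * |t - s| ^ γ := by
        have h3 := hHol s (hsub hs) t ht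
        have h4 := abs_sub_abs_le_abs_sub (f t) (f s)
        rw [hAdef]; linarith
      have h3 : A / 2 ≤ |f s| := by linarith
      calc (A / 2) ^ 2 ≤ |f s| ^ 2 := pow_le_pow_left₀ (by positivity) h3 2
        _ = (f s) ^ 2 := sq_abs _
    have hcont : ContinuousOn (fun s => (f s) ^ 2) (Icc 0 T) := hf.pow 2
    have hint : ∀ u v : ℝ, 0 ≤ u → u ≤ v → v ≤ T →
        IntervalIntegrable (fun s => (f s) ^ 2) volume u v := by
      intro u v hu huv hvT
      apply (hcont.mono ?_).intervalIntegrable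
      rw [uIcc_of_le huv]; exact Icc_subset_Icc hu hvT
    have i1 := hint 0 a le_rfl ha0 (by linarith)
    have i2 := hint a (a + δ) ha0 (by linarith) haδT
    have i3 := hint (a + δ) T (by linarith) haδT le_rfl
    have hsplit : (∫ s in (0:ℝ)..a, (f s) ^ 2) + (∫ s in a..(a + δ), (f s) ^ 2)
        + (∫ s in (a + δ)..T, (f s) ^ 2) = M2 := by
      rw [intervalIntegral.integral_add_adjacent_intervals i1 i2,
        intervalIntegral.integral_add_adjacent_intervals (i1.trans i2) i3]
    have hmid : δ * (A / 2) ^ 2 ≤ ∫ s in a..(a + δ), (f s) ^ 2 := by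
      have := intervalIntegral.integral_mono_on (by linarith : a ≤ a + δ)
        (intervalIntegrable_const (c := (A / 2) ^ 2)) i2 hlow
      rw [intervalIntegral.integral_const, smul_eq_mul] at this
      calc δ * (A / 2) ^ 2 = (a + δ - a) * (A / 2) ^ 2 := by ring
        _ ≤ _ := this
    have hn1 : 0 ≤ ∫ s in (0:ℝ)..a, (f s) ^ 2 :=
      intervalIntegral.integral_nonneg ha0 fun s _ => sq_nonneg _
    have hn3 : 0 ≤ ∫ s in (a + δ)..T, (f s) ^ 2 :=
      intervalIntegral.integral_nonneg haδT fun s _ => sq_nonneg _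
    linarith
  have hp : (0:ℝ) < 2 * γ + 1 := by linarith
  by_cases hC : 0 < Cγ ∧ (A / (2 * Cγ)) ^ (γ⁻¹) < T
  · -- Hölder-term case
    obtain ⟨hCpos, hδT⟩ := hC
    set δ := (A / (2 * Cγ)) ^ (γ⁻¹) with hδdef
    have hδ0 : 0 < δ := rpow_pos_of_pos (by positivity) _
    have hδγ : δ ^ γ = A / (2 * Cγ) := Real.rpow_inv_rpow (by positivity) hγ0.ne'
    have hCδ : Cγ * δ ^ γ ≤ A / 2 := by
      rw [hδγ]
      rw [show Cγ * (A / (2 * Cγ)) = A / 2 by field_simp]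
    have h1 := key δ hδ0 hδT.le hCδ
    have hE : δ * (A / 2) ^ 2 = A ^ ((2 * γ + 1) / γ) / (4 * (2 * Cγ) ^ (γ⁻¹)) := by
      rw [hδdef, Real.div_rpow hApos.le (by positivity),
        show (2 * γ + 1) / γ = γ⁻¹ + 2 by field_simp; ring,
        Real.rpow_add hApos, Real.rpow_two]
      field_simp
      rw [hAdef, sq_abs]
      ring
    have hAp : A ^ ((2 * γ + 1) / γ) ≤ 4 * (2 * Cγ) ^ (γ⁻¹) * M2 := by
      rw [hE] at h1
      have hpos : (0:ℝ) < 4 * (2 * Cγ) ^ (γ⁻¹) := by positivity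
      calc A ^ ((2 * γ + 1) / γ) = A ^ ((2 * γ + 1) / γ) / (4 * (2 * Cγ) ^ (γ⁻¹))
            * (4 * (2 * Cγ) ^ (γ⁻¹)) := by field_simp
        _ ≤ M2 * (4 * (2 * Cγ) ^ (γ⁻¹)) := mul_le_mul_of_nonneg_right h1 hpos.le
        _ = 4 * (2 * Cγ) ^ (γ⁻¹) * M2 := by ring
    have hfinal : A ≤ (4 * (2 * Cγ) ^ (γ⁻¹) * M2) ^ (γ / (2 * γ + 1)) := by
      have h4 := Real.rpow_le_rpow (rpow_nonneg hApos.le _) hAp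
        (by positivity : (0:ℝ) ≤ γ / (2 * γ + 1))
      rwa [← Real.rpow_mul hApos.le,
        show (2 * γ + 1) / γ * (γ / (2 * γ + 1)) = 1 by
          field_simp, Real.rpow_one] at h4
    have e1 : ((4:ℝ)) ^ (γ / (2 * γ + 1)) = 2 ^ (2 * γ / (2 * γ + 1)) := by
      rw [show (4:ℝ) = 2 ^ (2:ℝ) by
          rw [show (2:ℝ) = ((2:ℕ):ℝ) from rfl, Real.rpow_natCast]; norm_num,
        ← Real.rpow_mul (by norm_num)]
      ring_nf
    have e2 : ((2 * Cγ) ^ (γ⁻¹)) ^ (γ / (2 * γ + 1))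
        = 2 ^ (1 / (2 * γ + 1)) * Cγ ^ (1 / (2 * γ + 1)) := by
      rw [← Real.rpow_mul (by positivity),
        show γ⁻¹ * (γ / (2 * γ + 1)) = 1 / (2 * γ + 1) by field_simp,
        Real.mul_rpow (by norm_num) hCpos.le]
    have e3 : M2 ^ (γ / (2 * γ + 1)) = (M2 ^ ((1:ℝ)/2)) ^ (2 * γ / (2 * γ + 1)) := by
      rw [← Real.rpow_mul hM2]
      ring_nf
    have e4 : (2:ℝ) ^ (2 * γ / (2 * γ + 1)) * 2 ^ (1 / (2 * γ + 1)) = 2 := by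
      rw [← Real.rpow_add (by norm_num : (0:ℝ) < 2), ← add_div,
        div_self hp.ne', Real.rpow_one]
    have hR : (4 * (2 * Cγ) ^ (γ⁻¹) * M2) ^ (γ / (2 * γ + 1))
        = 2 * ((M2 ^ ((1:ℝ)/2)) ^ (2 * γ / (2 * γ + 1)) * Cγ ^ (1 / (2 * γ + 1))) := by
      rw [Real.mul_rpow (by positivity) hM2,
        Real.mul_rpow (by norm_num) (rpow_nonneg (by positivity) _), e1, e2, e3]
      calc 2 ^ (2 * γ / (2 * γ + 1)) * (2 ^ (1 / (2 * γ + 1)) * Cγ ^ (1 / (2 * γ + 1)))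
            * (M2 ^ ((1:ℝ)/2)) ^ (2 * γ / (2 * γ + 1))
          = (2 ^ (2 * γ / (2 * γ + 1)) * 2 ^ (1 / (2 * γ + 1)))
            * ((M2 ^ ((1:ℝ)/2)) ^ (2 * γ / (2 * γ + 1)) * Cγ ^ (1 / (2 * γ + 1))) := by ring
        _ = _ := by rw [e4]
    have hle : A ≤ 2 * ((M2 ^ ((1:ℝ)/2)) ^ (2 * γ / (2 * γ + 1)) * Cγ ^ (1 / (2 * γ + 1))) := by
      rw [← hR]; exact hfinal
    calc A ≤ 2 * ((M2 ^ ((1:ℝ)/2)) ^ (2 * γ / (2 * γ + 1)) * Cγ ^ (1 / (2 * γ + 1))) := hle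
      _ ≤ _ := by
        have := le_max_right (T ^ (-(1/2) : ℝ) * M2 ^ ((1:ℝ)/2))
          ((M2 ^ ((1:ℝ)/2)) ^ (2 * γ / (2 * γ + 1)) * Cγ ^ (1 / (2 * γ + 1)))
        linarith
  · -- L²-term case
    have hCT : Cγ * T ^ γ ≤ A / 2 := by
      rcases le_or_gt Cγ 0 with h | h
      · have : Cγ * T ^ γ ≤ 0 := mul_nonpos_of_nonpos_of_nonneg h (rpow_nonneg hT.le _)
        linarith
      · have hTle : T ≤ (A / (2 * Cγ)) ^ (γ⁻¹) := by
          by_contra hcon; push_neg at hcon; exact hC ⟨h, hcon⟩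
        have hTγ : T ^ γ ≤ A / (2 * Cγ) := by
          calc T ^ γ ≤ ((A / (2 * Cγ)) ^ (γ⁻¹)) ^ γ := Real.rpow_le_rpow hT.le hTle hγ0.le
            _ = A / (2 * Cγ) := Real.rpow_inv_rpow (by positivity) hγ0.ne'
        calc Cγ * T ^ γ ≤ Cγ * (A / (2 * Cγ)) := mul_le_mul_of_nonneg_left hTγ h.le
          _ = A / 2 := by field_simp
    have h1 := key T hT le_rfl hCT
    have h2 : (A / 2) ^ 2 ≤ M2 / T := (le_div_iff₀ hT).mpr (by linarith)
    have h3 : A / 2 ≤ T ^ (-(1/2) : ℝ) * M2 ^ ((1:ℝ)/2) := by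
      have hs := Real.sqrt_le_sqrt h2
      rw [Real.sqrt_sq (by positivity)] at hs
      rw [Real.rpow_neg hT.le, ← Real.sqrt_eq_rpow, ← Real.sqrt_eq_rpow]
      rw [show M2 / T = M2 * T⁻¹ by ring, Real.sqrt_mul hM2, Real.sqrt_inv] at hs
      calc A / 2 ≤ Real.sqrt M2 * (Real.sqrt T)⁻¹ := hs
        _ = (Real.sqrt T)⁻¹ * Real.sqrt M2 := by ring
    have := le_max_left (T ^ (-(1/2) : ℝ) * M2 ^ ((1:ℝ)/2))
      ((M2 ^ ((1:ℝ)/2)) ^ (2 * γ / (2 * γ + 1)) * Cγ ^ (1 / (2 * γ + 1)))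
    linarith
end

section
/- Let X : [0,T] → ℝⁿ be θ-Hölder rough with modulus L_θ(X) > 0, let (X,𝕏) be a γ-Hölder rough path with 1/3 < γ ≤ 1/2 and θ < 2γ, and let (Z,Z') be a rough path controlled by X, meaning δZ_{st} = Z'_s δX_{st} + R^Z_{st} with ‖R^Z‖_{2γ} < ∞. Then there is a constant M depending only on the dimensions such that ‖Z'‖_∞ ≤ (M·‖Z‖_∞ / L_θ(X)) · max( ‖R^Z‖_{2γ}^{θ/(2γ)} · ‖Z‖_∞^{-θ/(2γ)}, T^{-θ} ). -/
open Set

/-- `X` is `θ`-Hölder rough on `[0,T]` with modulus (at least) `L`: for every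
`s ∈ [0,T]`, every `ε ∈ (0,T/2]` and every unit vector `φ` there is `t ∈ [0,T]`
with `ε/2 < |t-s| < ε` and `|⟨φ, X_t - X_s⟩| > L·ε^θ`. -/
def HolderRoughWith (n : ℕ) (θ L T : ℝ) (X : ℝ → EuclideanSpace ℝ (Fin n)) : Prop :=
  ∀ s ∈ Icc (0:ℝ) T, ∀ ε ∈ Ioc (0:ℝ) (T/2),
    ∀ φ : EuclideanSpace ℝ (Fin n), ‖φ‖ = 1 →
      ∃ t ∈ Icc (0:ℝ) T, ε/2 < |t - s| ∧ |t - s| < ε ∧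
        L * ε ^ θ < |(inner ℝ φ (X t - X s) : ℝ)|

set_option maxHeartbeats 4000000 in
/-- If `X` is `θ`-Hölder rough with modulus `L > 0` and `(Z,Z')` is a rough path
controlled by `X` (with `θ < 2γ`), then
`‖Z'‖_∞ ≤ (M·‖Z‖_∞/L)·max( ‖R^Z‖_{2γ}^{θ/2γ}·‖Z‖_∞^{-θ/2γ}, T^{-θ} )`
for a constant `M` depending only on the dimensions `n`, `m`. -/
theorem stmt2 (n m : ℕ) :
    ∃ M > (0:ℝ), ∀ (T γ θ L CZ CR : ℝ)
      (X : ℝ → EuclideanSpace ℝ (Fin n)) (Z : ℝ → EuclideanSpace ℝ (Fin m))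
      (Z' : ℝ → EuclideanSpace ℝ (Fin n) →L[ℝ] EuclideanSpace ℝ (Fin m)),
      0 < T → 1/3 < γ → γ ≤ 1/2 → 0 < θ → θ < 2 * γ →
      0 < L → HolderRoughWith n θ L T X →
      0 ≤ CZ → 0 ≤ CR →
      (∀ t ∈ Icc (0:ℝ) T, ‖Z t‖ ≤ CZ) →
      (∀ s ∈ Icc (0:ℝ) T, ∀ t ∈ Icc (0:ℝ) T,
        ‖Z t - Z s - Z' s (X t - X s)‖ ≤ CR * |t - s| ^ (2 * γ)) →
      ∀ s ∈ Icc (0:ℝ) T,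
        ‖Z' s‖ ≤ M * CZ / L *
          max (CR ^ (θ / (2 * γ)) * CZ ^ (-(θ / (2 * γ)))) (T ^ (-θ)) := by
  refine ⟨6, by norm_num, ?_⟩
  intro T γ θ L CZ CR X Z Z' hT hγ1 hγ2 hθ hθγ hL hrough hCZ hCR hZb hRb s hs
  have h2γ : (0:ℝ) < 2 * γ := by linarith
  have hθ1 : θ ≤ 1 := by linarith
  have hT2 : (0:ℝ) < T / 2 := by linarith
  set A := Z' s with hA
  set B := ContinuousLinearMap.adjoint A with hB
  set q : ℝ := θ / (2 * γ) with hq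
  set Mx : ℝ := max (CR ^ q * CZ ^ (-q)) (T ^ (-θ)) with hMx
  have hMxpos : 0 < Mx := lt_max_of_lt_right (Real.rpow_pos_of_pos hT _)
  -- key inequality from roughness
  have key : ∀ ε ∈ Ioc (0:ℝ) (T/2), ∀ ψ : EuclideanSpace ℝ (Fin m),
      ‖B ψ‖ * (L * ε ^ θ) ≤ ‖ψ‖ * (2 * CZ + CR * ε ^ (2 * γ)) := by
    intro ε hε ψ
    have hεθ : 0 < ε ^ θ := Real.rpow_pos_of_pos hε.1 θ
    have hε2γ : 0 ≤ ε ^ (2 * γ) := (Real.rpow_pos_of_pos hε.1 _).le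
    have hrhs : 0 ≤ 2 * CZ + CR * ε ^ (2 * γ) :=
      add_nonneg (by linarith) (mul_nonneg hCR hε2γ)
    rcases eq_or_ne (B ψ) 0 with hv | hv
    · rw [hv, norm_zero, zero_mul]
      exact mul_nonneg (norm_nonneg ψ) hrhs
    · have hvn : 0 < ‖B ψ‖ := norm_pos_iff.mpr hv
      set φ : EuclideanSpace ℝ (Fin n) := ‖B ψ‖⁻¹ • (B ψ) with hφ
      have hφ1 : ‖φ‖ = 1 := by
        rw [hφ, norm_smul, norm_inv, norm_norm, inv_mul_cancel₀ hvn.ne']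
      obtain ⟨t, ht, h1, h2, h3⟩ := hrough s hs ε hε φ hφ1
      have hAbound : ‖A (X t - X s)‖ ≤ 2 * CZ + CR * ε ^ (2 * γ) := by
        have hZt := hZb t ht
        have hZs := hZb s hs
        have hR := hRb s hs t ht
        have hmono : |t - s| ^ (2 * γ) ≤ ε ^ (2 * γ) :=
          Real.rpow_le_rpow (abs_nonneg _) h2.le h2γ.le
        calc ‖A (X t - X s)‖
            = ‖(Z t - Z s) - (Z t - Z s - A (X t - X s))‖ := by congr 1; abel
          _ ≤ ‖Z t - Z s‖ + ‖Z t - Z s - A (X t - X s)‖ := norm_sub_le _ _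
          _ ≤ (‖Z t‖ + ‖Z s‖) + CR * |t - s| ^ (2 * γ) :=
              add_le_add (norm_sub_le _ _) hR
          _ ≤ (CZ + CZ) + CR * ε ^ (2 * γ) := by
              have := mul_le_mul_of_nonneg_left hmono hCR
              gcongr
          _ = 2 * CZ + CR * ε ^ (2 * γ) := by ring
      have hinner : (inner ℝ φ (X t - X s) : ℝ)
          = ‖B ψ‖⁻¹ * inner ℝ ψ (A (X t - X s)) := by
        rw [hφ, real_inner_smul_left]
        congr 1
        exact ContinuousLinearMap.adjoint_inner_left A (X t - X s) ψ
      have h4 : L * ε ^ θ ≤ ‖B ψ‖⁻¹ * (‖ψ‖ * ‖A (X t - X s)‖) := by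
        calc L * ε ^ θ ≤ |(inner ℝ φ (X t - X s) : ℝ)| := h3.le
          _ = ‖B ψ‖⁻¹ * |(inner ℝ ψ (A (X t - X s)) : ℝ)| := by
              rw [hinner, abs_mul, abs_of_pos (inv_pos.mpr hvn)]
          _ ≤ ‖B ψ‖⁻¹ * (‖ψ‖ * ‖A (X t - X s)‖) := by
              have := abs_real_inner_le_norm ψ (A (X t - X s))
              gcongr
      calc ‖B ψ‖ * (L * ε ^ θ)
          ≤ ‖B ψ‖ * (‖B ψ‖⁻¹ * (‖ψ‖ * ‖A (X t - X s)‖)) :=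
            mul_le_mul_of_nonneg_left h4 hvn.le
        _ = ‖ψ‖ * ‖A (X t - X s)‖ := by field_simp
        _ ≤ ‖ψ‖ * (2 * CZ + CR * ε ^ (2 * γ)) :=
            mul_le_mul_of_nonneg_left hAbound (norm_nonneg ψ)
  -- bound the adjoint pointwise
  have hbound : ∀ ψ : EuclideanSpace ℝ (Fin m),
      ‖B ψ‖ ≤ 6 * CZ / L * Mx * ‖ψ‖ := by
    intro ψ
    have hψ0 : 0 ≤ ‖ψ‖ := norm_nonneg ψ
    have hTθ : (0:ℝ) < T ^ θ := Real.rpow_pos_of_pos hT θ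
    have hc6 : 0 ≤ 6 * CZ / L := div_nonneg (by linarith) hL.le
    by_cases hcase : CR * (T / 2) ^ (2 * γ) ≤ CZ
    · -- take ε = T/2
      have hk := key (T / 2) ⟨hT2, le_refl _⟩ ψ
      have h5 : ‖B ψ‖ * (L * (T / 2) ^ θ) ≤ ‖ψ‖ * (3 * CZ) := by
        refine hk.trans ?_
        nlinarith [mul_le_mul_of_nonneg_left hcase hψ0]
      have h2θ : (2:ℝ) ^ θ ≤ 2 := by
        calc (2:ℝ) ^ θ ≤ (2:ℝ) ^ (1:ℝ) :=
          Real.rpow_le_rpow_of_exponent_le (by norm_num) hθ1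
        _ = 2 := Real.rpow_one 2
      have hhalf : T ^ θ / 2 ≤ (T / 2) ^ θ := by
        rw [Real.div_rpow hT.le (by norm_num : (0:ℝ) ≤ 2)]
        gcongr
      have h6 : ‖B ψ‖ * (L * T ^ θ) ≤ 6 * CZ * ‖ψ‖ := by
        nlinarith [mul_le_mul_of_nonneg_left hhalf
          (mul_nonneg (norm_nonneg (B ψ)) hL.le), h5]
      have hTneg : (T ^ θ)⁻¹ ≤ Mx := by
        rw [hMx, ← Real.rpow_neg hT.le]
        exact le_max_right _ _
      have step1 : ‖B ψ‖ ≤ 6 * CZ / L * (T ^ θ)⁻¹ * ‖ψ‖ := by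
        rw [show 6 * CZ / L * (T ^ θ)⁻¹ * ‖ψ‖ = 6 * CZ * ‖ψ‖ / (L * T ^ θ) by
          field_simp]
        rw [le_div_iff₀ (mul_pos hL hTθ)]
        exact h6
      exact step1.trans
        (mul_le_mul_of_nonneg_right (mul_le_mul_of_nonneg_left hTneg hc6) hψ0)
    · push_neg at hcase
      have hCRpos : 0 < CR := by
        rcases lt_or_eq_of_le hCR with h | h
        · exact h
        · exfalso; rw [← h] at hcase; simp at hcase; linarith
      rcases eq_or_lt_of_le hCZ with hCZ0 | hCZpos
      · -- CZ = 0 : Z' s must vanish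
        have hCZ0 : CZ = 0 := hCZ0.symm
        have hvz : ‖B ψ‖ ≤ 0 := by
          by_contra hbp
          push_neg at hbp
          have hψpos : 0 < ‖ψ‖ := by
            rcases eq_or_ne ψ 0 with h | h
            · exfalso; rw [h] at hbp; simp at hbp
            · exact norm_pos_iff.mpr h
          set p : ℝ := 2 * γ - θ with hp
          have hppos : 0 < p := by rw [hp]; linarith
          set c : ℝ := ‖B ψ‖ * L / (‖ψ‖ * CR) with hc
          have hcpos : 0 < c := div_pos (mul_pos hbp hL) (mul_pos hψpos hCRpos)
          set ε : ℝ := min (T / 2) ((c / 2) ^ p⁻¹) with hε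
          have hεpos : 0 < ε :=
            lt_min hT2 (Real.rpow_pos_of_pos (half_pos hcpos) _)
          have hεT : ε ≤ T / 2 := min_le_left _ _
          have hεθ : 0 < ε ^ θ := Real.rpow_pos_of_pos hεpos θ
          have hεp : ε ^ p ≤ c / 2 := by
            calc ε ^ p ≤ ((c / 2) ^ p⁻¹) ^ p :=
              Real.rpow_le_rpow hεpos.le (min_le_right _ _) hppos.le
            _ = (c / 2) ^ (p⁻¹ * p) := by
                rw [← Real.rpow_mul (half_pos hcpos).le]
            _ = c / 2 := by rw [inv_mul_cancel₀ hppos.ne', Real.rpow_one]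
          have hk := key ε ⟨hεpos, hεT⟩ ψ
          rw [hCZ0] at hk
          have hsplit : ε ^ (2 * γ) = ε ^ θ * ε ^ p := by
            rw [← Real.rpow_add hεpos]
            congr 1
            rw [hp]; ring
          rw [hsplit] at hk
          have h8 : ‖B ψ‖ * L * ε ^ θ ≤ ‖ψ‖ * CR * ε ^ p * ε ^ θ := by
            nlinarith [hk]
          have h7 : ‖B ψ‖ * L ≤ ‖ψ‖ * CR * ε ^ p :=
            le_of_mul_le_mul_right h8 hεθ
          have h9 : ‖ψ‖ * CR * c = ‖B ψ‖ * L := by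
            rw [hc]
            field_simp
          have h12 : ‖ψ‖ * CR * ε ^ p ≤ ‖ψ‖ * CR * (c / 2) :=
            mul_le_mul_of_nonneg_left hεp (mul_nonneg hψ0 hCR)
          have h13 : ‖ψ‖ * CR * (c / 2) = ‖B ψ‖ * L / 2 := by
            rw [show ‖ψ‖ * CR * (c / 2) = ‖ψ‖ * CR * c / 2 by ring, h9]
          linarith [h7, h12, h13, mul_pos hbp hL]
        have hB0 : ‖B ψ‖ = 0 := le_antisymm hvz (norm_nonneg _)
        rw [hB0, hCZ0]
        simp
      · -- CZ > 0 : take ε = (CZ/CR)^(1/(2γ))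
        set w : ℝ := CZ / CR with hw
        have hwpos : 0 < w := div_pos hCZpos hCRpos
        set ε : ℝ := w ^ (2 * γ)⁻¹ with hε
        have hεpos : 0 < ε := Real.rpow_pos_of_pos hwpos _
        have hε2γ : ε ^ (2 * γ) = w := by
          rw [hε, ← Real.rpow_mul hwpos.le, inv_mul_cancel₀ h2γ.ne', Real.rpow_one]
        have hCRne : CR ≠ 0 := hCRpos.ne'
        have hCRw : CR * ε ^ (2 * γ) = CZ := by
          rw [hε2γ, hw]; field_simp
        have hεT : ε ≤ T / 2 := by
          by_contra h
          push_neg at h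
          have h10 : (T / 2) ^ (2 * γ) ≤ ε ^ (2 * γ) :=
            Real.rpow_le_rpow hT2.le h.le h2γ.le
          have h11 : CR * (T / 2) ^ (2 * γ) ≤ CZ := by
            calc CR * (T / 2) ^ (2 * γ) ≤ CR * ε ^ (2 * γ) :=
              mul_le_mul_of_nonneg_left h10 hCR
            _ = CZ := hCRw
          linarith
        have hk := key ε ⟨hεpos, hεT⟩ ψ
        rw [hCRw] at hk
        have hεθq : ε ^ θ = w ^ q := by
          rw [hε, ← Real.rpow_mul hwpos.le, hq, div_eq_mul_inv, mul_comm]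
        rw [hεθq] at hk
        have hwq : 0 < w ^ q := Real.rpow_pos_of_pos hwpos q
        have hE : w ^ (-q) = CR ^ q * CZ ^ (-q) := by
          rw [hw, Real.rpow_neg (div_nonneg hCZ hCR), Real.div_rpow hCZ hCR,
            Real.rpow_neg hCZ]
          rw [inv_div, div_eq_mul_inv]
        have hMq : CR ^ q * CZ ^ (-q) ≤ Mx := le_max_left _ _
        have hwneg : w ^ (-q) = (w ^ q)⁻¹ := Real.rpow_neg hwpos.le q
        have step1 : ‖B ψ‖ * (L * w ^ q) ≤
            6 * CZ / L * (w ^ q)⁻¹ * ‖ψ‖ * (L * w ^ q) := by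
          have heq : 6 * CZ / L * (w ^ q)⁻¹ * ‖ψ‖ * (L * w ^ q)
              = 6 * CZ * ‖ψ‖ := by
            field_simp
          rw [heq]
          refine hk.trans ?_
          nlinarith [mul_nonneg hCZ hψ0]
        have step2 : ‖B ψ‖ ≤ 6 * CZ / L * (w ^ q)⁻¹ * ‖ψ‖ :=
          le_of_mul_le_mul_right step1 (mul_pos hL hwq)
        calc ‖B ψ‖ ≤ 6 * CZ / L * (w ^ q)⁻¹ * ‖ψ‖ := step2
          _ = 6 * CZ / L * (CR ^ q * CZ ^ (-q)) * ‖ψ‖ := by rw [← hwneg, hE]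
          _ ≤ 6 * CZ / L * Mx * ‖ψ‖ :=
            mul_le_mul_of_nonneg_right (mul_le_mul_of_nonneg_left hMq hc6) hψ0
  -- conclude via the adjoint
  have hD0 : 0 ≤ 6 * CZ / L * Mx :=
    mul_nonneg (div_nonneg (by linarith) hL.le) hMxpos.le
  have hnorm : ‖A‖ = ‖B‖ :=
    (LinearIsometryEquiv.norm_map ContinuousLinearMap.adjoint A).symm
  rw [hA] at hnorm
  rw [hnorm]
  exact ContinuousLinearMap.opNorm_le_bound B hD0 hbound
end

section
/- If X : [0,T] → ℝⁿ is θ-Hölder rough (with modulus L_θ(X) > 0) and (Z,Z') is a controlled rough path with Z identically zero, then Z' is identically zero. In particular, the derivative process Z' in the decomposition δZ_{st} = Z'_s δX_{st} + R^Z_{st} with ‖R^Z‖_{2γ} < ∞ and θ < 2γ is uniquely determined by Z. -/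
open Set

/-- If `X` is `θ`-Hölder rough (with modulus `L > 0`) and `(Z,Z')` is controlled by `X`
with `Z ≡ 0` on `[0,T]`, then `Z' ≡ 0` on `[0,T]`; hence the derivative process `Z'` in
the decomposition `δZ = Z' δX + R^Z` (with `‖R^Z‖_{2γ} < ∞`, `θ < 2γ`) is uniquely
determined by `Z`. -/
theorem stmt3 (n m : ℕ) (T γ θ L CR : ℝ)
    (X : ℝ → EuclideanSpace ℝ (Fin n)) (Z : ℝ → EuclideanSpace ℝ (Fin m))
    (Z' : ℝ → EuclideanSpace ℝ (Fin n) →L[ℝ] EuclideanSpace ℝ (Fin m))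
    (hT : 0 < T) (hγ1 : 1/3 < γ) (hγ2 : γ ≤ 1/2) (hθ0 : 0 < θ) (hθ : θ < 2 * γ)
    (hL : 0 < L) (hrough : HolderRoughWith n θ L T X)
    (hZ : ∀ t ∈ Icc (0:ℝ) T, Z t = 0)
    (hR : ∀ s ∈ Icc (0:ℝ) T, ∀ t ∈ Icc (0:ℝ) T,
      ‖Z t - Z s - Z' s (X t - X s)‖ ≤ CR * |t - s| ^ (2 * γ)) :
    ∀ s ∈ Icc (0:ℝ) T, Z' s = 0 := by
  intro s hs
  set A := Z' s with hA
  -- it suffices to show the adjoint vanishes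
  have key : ∀ ψ : EuclideanSpace ℝ (Fin m), (ContinuousLinearMap.adjoint A) ψ = 0 := by
    intro ψ
    by_contra hv
    set v := (ContinuousLinearMap.adjoint A) ψ with hvdef
    have hvn : 0 < ‖v‖ := norm_pos_iff.mpr hv
    set φ : EuclideanSpace ℝ (Fin n) := ‖v‖⁻¹ • v with hφdef
    have hφ : ‖φ‖ = 1 := norm_smul_inv_norm hv
    have hp : 0 < 2 * γ - θ := by linarith
    have main : ∀ ε ∈ Ioc (0:ℝ) (T/2), ‖v‖ * L ≤ ‖ψ‖ * CR * ε ^ (2*γ - θ) := by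
      intro ε hε
      obtain ⟨t, ht, h1, h2, h3⟩ := hrough s hs ε hε φ hφ
      have hts : 0 < |t - s| := lt_trans (by linarith [hε.1]) h1
      have hRx : ‖A (X t - X s)‖ ≤ CR * |t - s| ^ (2*γ) := by
        have h := hR s hs t ht
        rwa [hZ s hs, hZ t ht, sub_self, zero_sub, norm_neg] at h
      have hCR : 0 ≤ CR := by
        have hp2 : 0 < |t - s| ^ (2*γ) := Real.rpow_pos_of_pos hts _
        nlinarith [norm_nonneg (A (X t - X s))]
      have hbound : ‖A (X t - X s)‖ ≤ CR * ε ^ (2*γ) := by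
        refine hRx.trans (mul_le_mul_of_nonneg_left ?_ hCR)
        exact Real.rpow_le_rpow (abs_nonneg _) h2.le (by linarith)
      have hip : |(inner ℝ φ (X t - X s) : ℝ)| = ‖v‖⁻¹ * |(inner ℝ ψ (A (X t - X s)) : ℝ)| := by
        rw [hφdef, real_inner_smul_left, hvdef, ContinuousLinearMap.adjoint_inner_left,
          abs_mul, abs_inv, abs_norm]
      have hcs : |(inner ℝ ψ (A (X t - X s)) : ℝ)| ≤ ‖ψ‖ * ‖A (X t - X s)‖ :=
        abs_real_inner_le_norm _ _
      have h4 : L * ε ^ θ < ‖v‖⁻¹ * (‖ψ‖ * (CR * ε ^ (2*γ))) := by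
        calc L * ε ^ θ < |(inner ℝ φ (X t - X s) : ℝ)| := h3
          _ = ‖v‖⁻¹ * |(inner ℝ ψ (A (X t - X s)) : ℝ)| := hip
          _ ≤ ‖v‖⁻¹ * (‖ψ‖ * (CR * ε ^ (2*γ))) := by
              apply mul_le_mul_of_nonneg_left _ (inv_nonneg.mpr (norm_nonneg _))
              exact hcs.trans (mul_le_mul_of_nonneg_left hbound (norm_nonneg _))
      have h5 : ‖v‖ * (L * ε ^ θ) < ‖ψ‖ * (CR * ε ^ (2*γ)) := by
        calc ‖v‖ * (L * ε ^ θ) < ‖v‖ * (‖v‖⁻¹ * (‖ψ‖ * (CR * ε ^ (2*γ)))) :=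
              mul_lt_mul_of_pos_left h4 hvn
          _ = ‖ψ‖ * (CR * ε ^ (2*γ)) := by
              rw [← mul_assoc, mul_inv_cancel₀ hvn.ne', one_mul]
      have hsplit : ε ^ (2*γ) = ε ^ θ * ε ^ (2*γ - θ) := by
        rw [← Real.rpow_add hε.1]; ring_nf
      have ha : 0 < ε ^ θ := Real.rpow_pos_of_pos hε.1 _
      rw [hsplit] at h5
      have h6 : (‖v‖ * L) * ε ^ θ < (‖ψ‖ * CR * ε ^ (2*γ - θ)) * ε ^ θ := by ring_nf; ring_nf at h5; linarith
      exact (lt_of_mul_lt_mul_right h6 ha.le).le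
    have hlim : Filter.Tendsto (fun ε : ℝ => ‖ψ‖ * CR * ε ^ (2*γ - θ))
        (nhdsWithin 0 (Ioi 0)) (nhds 0) := by
      have h1 : Filter.Tendsto (fun ε : ℝ => ε ^ (2*γ - θ)) (nhdsWithin 0 (Ioi 0)) (nhds 0) := by
        have hc : ContinuousAt (fun ε : ℝ => ε ^ (2*γ - θ)) 0 :=
          Real.continuousAt_rpow_const 0 _ (Or.inr hp.le)
        have h2t : Filter.Tendsto (fun ε : ℝ => ε ^ (2*γ - θ)) (nhdsWithin 0 (Ioi 0))
            (nhds ((0:ℝ) ^ (2*γ - θ))) :=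
          hc.tendsto.mono_left (nhdsWithin_le_nhds (s := Ioi (0:ℝ)))
        rwa [Real.zero_rpow (ne_of_gt hp)] at h2t
      have := h1.const_mul (‖ψ‖ * CR)
      simpa using this
    have hev : ∀ᶠ ε in nhdsWithin (0:ℝ) (Ioi 0), ‖v‖ * L ≤ ‖ψ‖ * CR * ε ^ (2*γ - θ) := by
      have hmem : Ioc (0:ℝ) (T/2) ∈ nhdsWithin (0:ℝ) (Ioi 0) :=
        Ioc_mem_nhdsGT_of_mem ⟨le_refl 0, by linarith⟩
      exact Filter.eventually_of_mem hmem main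
    have hle : ‖v‖ * L ≤ 0 := ge_of_tendsto hlim hev
    exact absurd hle (not_le.mpr (mul_pos hvn hL))
  have hadj : (ContinuousLinearMap.adjoint A) = 0 := ContinuousLinearMap.ext key
  have : A = 0 := by
    have := congrArg (ContinuousLinearMap.adjoint) hadj
    rwa [ContinuousLinearMap.adjoint_adjoint, map_zero] at this
  exact this
end

section
/- For α ∈ (0, 1/2) there exists a constant c such that for every nonnegative v ∈ L²([0,1]), ‖Ĩ_α v‖_{L²(ℝ₊)}² ≤ c·‖v‖_{L²[0,1]}·‖Ĩ_{2α} v‖_{L²(ℝ₊)}, where (Ĩ_α v)(s) = ∫₀¹ |s−r|^{α−1} v(r) dr. -/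
open Set MeasureTheory Real
open scoped ENNReal

lemma absRpowII {γ : ℝ} (hγ : -1 < γ) (a b : ℝ) :
    IntervalIntegrable (fun x => |x| ^ γ) volume a b := by
  have key : ∀ c : ℝ, 0 ≤ c → IntervalIntegrable (fun x => |x| ^ γ) volume 0 c := by
    intro c hc
    rw [intervalIntegrable_iff, uIoc_of_le hc]
    exact ((intervalIntegral.intervalIntegrable_rpow' hγ (a := 0) (b := c)).1).congr_fun
      (fun x hx => by rw [abs_of_pos hx.1]) measurableSet_Ioc
  have key2 : ∀ c : ℝ, IntervalIntegrable (fun x => |x| ^ γ) volume 0 c := by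
    intro c
    rcases le_total 0 c with hc | hc
    · exact key c hc
    · have := (IntervalIntegrable.iff_comp_neg (f := fun x : ℝ => |x| ^ γ)).mp (key (-c) (by linarith))
      simp only [abs_neg, neg_zero, neg_neg] at this
      exact this
  exact (key2 a).symm.trans (key2 b)

lemma absRpowIntOn {γ : ℝ} (hγ : -1 < γ) (s a b : ℝ) :
    IntegrableOn (fun r => |s - r| ^ γ) (Ioc a b) volume := by
  have h := ((absRpowII hγ (a - s) (b - s)).comp_sub_right s)
  simp only [sub_add_cancel] at h
  have he : (fun r : ℝ => |s - r| ^ γ) = fun r => |r - s| ^ γ := by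
    funext r; rw [abs_sub_comm]
  rw [he]
  exact h.1

lemma kernelVInt {γ : ℝ} (hγ : -1 < γ) {v : ℝ → ℝ} (hv : Continuous v) (s : ℝ) :
    IntegrableOn (fun r => |s - r| ^ γ * v r) (Ioc 0 1) volume := by
  obtain ⟨M, hM⟩ := isCompact_Icc.exists_bound_of_continuousOn
    (hv.continuousOn : ContinuousOn v (Icc (0:ℝ) 1))
  refine Integrable.mono' ((absRpowIntOn hγ s 0 1).const_mul M) ?_ ?_
  · exact (Measurable.mul (by fun_prop) hv.measurable).aestronglyMeasurable
  · refine (ae_restrict_iff' measurableSet_Ioc).2 (ae_of_all _ fun r hr => ?_)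
    have h1 : (0:ℝ) ≤ |s - r| ^ γ := rpow_nonneg (abs_nonneg _) _
    have h2 : |v r| ≤ M := by
      simpa using hM r (Ioc_subset_Icc_self hr)
    calc ‖|s - r| ^ γ * v r‖ = |s - r| ^ γ * |v r| := by
          rw [norm_mul, Real.norm_eq_abs, Real.norm_eq_abs, abs_of_nonneg h1]
      _ ≤ |s - r| ^ γ * M := by
          exact mul_le_mul_of_nonneg_left h2 h1
      _ = M * |s - r| ^ γ := mul_comm _ _

lemma convertSq {γ : ℝ} (hγ : -1 < γ) {v : ℝ → ℝ} (hv : Continuous v)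
    (hv0 : ∀ r, 0 ≤ v r) (s : ℝ) :
    ENNReal.ofReal ((∫ r in (0:ℝ)..1, |s - r| ^ γ * v r) ^ 2)
      = (∫⁻ r in Ioc (0:ℝ) 1,
          ENNReal.ofReal (|s - r| ^ γ) * ENNReal.ofReal (v r)) ^ 2 := by
  have hint := kernelVInt hγ hv s
  have hnn : 0 ≤ᵐ[volume.restrict (Ioc (0:ℝ) 1)] fun r => |s - r| ^ γ * v r :=
    ae_of_all _ fun r => mul_nonneg (rpow_nonneg (abs_nonneg _) _) (hv0 r)
  have hnn' : (0:ℝ) ≤ ∫ r in Ioc (0:ℝ) 1, |s - r| ^ γ * v r :=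
    setIntegral_nonneg measurableSet_Ioc fun r _ =>
      mul_nonneg (rpow_nonneg (abs_nonneg _) _) (hv0 r)
  rw [intervalIntegral.integral_of_le zero_le_one, ENNReal.ofReal_pow hnn',
    ofReal_integral_eq_lintegral_ofReal hint hnn]
  congr 1
  exact lintegral_congr fun r => ENNReal.ofReal_mul (rpow_nonneg (abs_nonneg _) _)

lemma Cfin {α : ℝ} (hα0 : 0 < α) (hα : α < 1/2) :
    Integrable (fun t : ℝ => |t| ^ (α - 1) * |1 - t| ^ (α - 1)) := by
  have hγ : (-1:ℝ) < α - 1 := by linarith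
  have hle : α - 1 ≤ 0 := by linarith
  have h2 : (2:ℝ) * α - 2 < -1 := by linarith
  have hmeas : Measurable fun t : ℝ => |t| ^ (α - 1) * |1 - t| ^ (α - 1) := by fun_prop
  rw [← integrableOn_univ, ← Iic_union_Ioi (a := (2:ℝ)),
    ← Iic_union_Ioc_eq_Iic (show (-1:ℝ) ≤ 2 by norm_num), union_assoc, integrableOn_union,
    integrableOn_union]
  refine ⟨?_, ?_, ?_⟩
  · -- Iic (-1)
    rw [← (Measure.measurePreserving_neg (volume : Measure ℝ)).integrableOn_comp_preimage
        (Homeomorph.neg ℝ).measurableEmbedding]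
    simp only [Function.comp_def, neg_preimage, neg_Iic, neg_neg, abs_neg]
    have hbb : IntegrableOn (fun t : ℝ => t ^ (2 * α - 2)) (Ici (1:ℝ)) volume := by
      rw [integrableOn_Ici_iff_integrableOn_Ioi]
      exact integrableOn_Ioi_rpow_of_lt h2 zero_lt_one
    refine Integrable.mono' hbb
      ((by fun_prop : Measurable fun x : ℝ => |x| ^ (α - 1) * |1 - -x| ^ (α - 1)).aestronglyMeasurable) ?_
    refine (ae_restrict_iff' measurableSet_Ici).2 (ae_of_all _ fun t ht => ?_)
    have ht1 : (1:ℝ) ≤ t := ht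
    have ht0 : (0:ℝ) < t := by linarith
    have e2 : |1 - -t| = 1 + t := by rw [sub_neg_eq_add]; exact abs_of_pos (by linarith)
    have hnn : (0:ℝ) ≤ |t| ^ (α - 1) * |1 - -t| ^ (α - 1) :=
      mul_nonneg (rpow_nonneg (abs_nonneg _) _) (rpow_nonneg (abs_nonneg _) _)
    rw [Real.norm_eq_abs, abs_of_nonneg hnn, abs_of_pos ht0, e2]
    have hmono : (1 + t) ^ (α - 1) ≤ t ^ (α - 1) :=
      rpow_le_rpow_of_nonpos ht0 (by linarith) hle
    calc t ^ (α - 1) * (1 + t) ^ (α - 1) ≤ t ^ (α - 1) * t ^ (α - 1) :=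
          mul_le_mul_of_nonneg_left hmono (rpow_nonneg ht0.le _)
      _ = t ^ (2 * α - 2) := by
          rw [← rpow_add ht0]; ring_nf
  · -- Ioc (-1) 2
    have hb1 : IntegrableOn (fun t : ℝ => |t| ^ (α - 1)) (Ioc (-1:ℝ) 2) volume :=
      (absRpowII hγ (-1) 2).1
    have hb2 : IntegrableOn (fun t : ℝ => |1 - t| ^ (α - 1)) (Ioc (-1:ℝ) 2) volume :=
      absRpowIntOn hγ 1 (-1) 2
    refine Integrable.mono' (((hb1.add hb2)).const_mul ((1/2:ℝ) ^ (α - 1))) ?_ ?_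
    · exact hmeas.aestronglyMeasurable
    · refine ae_of_all _ fun t => ?_
      have h1 : (0:ℝ) ≤ |t| ^ (α - 1) := rpow_nonneg (abs_nonneg _) _
      have h2' : (0:ℝ) ≤ |1 - t| ^ (α - 1) := rpow_nonneg (abs_nonneg _) _
      have hc : (0:ℝ) ≤ (1/2:ℝ) ^ (α - 1) := rpow_nonneg (by norm_num) _
      rw [Real.norm_eq_abs, abs_of_nonneg (mul_nonneg h1 h2')]
      rcases le_total t (1/2 : ℝ) with hcase | hcase
      · have hge : (1/2:ℝ) ≤ |1 - t| := by
          rw [abs_of_nonneg (by linarith)]; linarith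
        have : |1 - t| ^ (α - 1) ≤ (1/2:ℝ) ^ (α - 1) :=
          rpow_le_rpow_of_nonpos (by norm_num) hge hle
        calc |t| ^ (α - 1) * |1 - t| ^ (α - 1) ≤ |t| ^ (α - 1) * (1/2:ℝ) ^ (α - 1) :=
              mul_le_mul_of_nonneg_left this h1
          _ = (1/2:ℝ) ^ (α - 1) * |t| ^ (α - 1) := mul_comm _ _
          _ ≤ (1/2:ℝ) ^ (α - 1) * (|t| ^ (α - 1) + |1 - t| ^ (α - 1)) := by
              refine mul_le_mul_of_nonneg_left ?_ hc; linarith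
      · have hge : (1/2:ℝ) ≤ |t| := by
          rw [abs_of_nonneg (by linarith)]; linarith
        have : |t| ^ (α - 1) ≤ (1/2:ℝ) ^ (α - 1) :=
          rpow_le_rpow_of_nonpos (by norm_num) hge hle
        calc |t| ^ (α - 1) * |1 - t| ^ (α - 1) ≤ (1/2:ℝ) ^ (α - 1) * |1 - t| ^ (α - 1) :=
              mul_le_mul_of_nonneg_right this h2'
          _ ≤ (1/2:ℝ) ^ (α - 1) * (|t| ^ (α - 1) + |1 - t| ^ (α - 1)) := by
              refine mul_le_mul_of_nonneg_left ?_ hc; linarith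
  · -- Ioi 2
    have hbb : IntegrableOn (fun t : ℝ => t ^ (2 * α - 2)) (Ioi (2:ℝ)) volume :=
      integrableOn_Ioi_rpow_of_lt h2 (by norm_num)
    refine Integrable.mono' (hbb.const_mul ((2:ℝ) ^ (1 - α))) hmeas.aestronglyMeasurable ?_
    refine (ae_restrict_iff' measurableSet_Ioi).2 (ae_of_all _ fun t ht => ?_)
    have ht2 : (2:ℝ) < t := ht
    have ht0 : (0:ℝ) < t := by linarith
    have e1 : |t| = t := abs_of_pos ht0
    have e2 : |1 - t| = t - 1 := by rw [abs_sub_comm]; exact abs_of_pos (by linarith)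
    have hhalf : t / 2 ≤ t - 1 := by linarith
    have hb : |t| ^ (α - 1) * |1 - t| ^ (α - 1) ≤ (2:ℝ) ^ (1 - α) * t ^ (2 * α - 2) := by
      rw [e1, e2]
      have h3 : (t - 1) ^ (α - 1) ≤ (t / 2) ^ (α - 1) :=
        rpow_le_rpow_of_nonpos (by linarith) hhalf hle
      have h4 : (t / 2) ^ (α - 1) = t ^ (α - 1) * (2:ℝ) ^ (1 - α) := by
        rw [div_rpow ht0.le (by norm_num), div_eq_mul_inv, ← rpow_neg (by norm_num : (0:ℝ) ≤ 2)]
        ring_nf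
      calc t ^ (α - 1) * (t - 1) ^ (α - 1) ≤ t ^ (α - 1) * (t / 2) ^ (α - 1) :=
            mul_le_mul_of_nonneg_left h3 (rpow_nonneg ht0.le _)
        _ = (2:ℝ) ^ (1 - α) * (t ^ (α - 1) * t ^ (α - 1)) := by rw [h4]; ring
        _ = (2:ℝ) ^ (1 - α) * t ^ (2 * α - 2) := by
            rw [← rpow_add ht0]; ring_nf
    have hnn : (0:ℝ) ≤ |t| ^ (α - 1) * |1 - t| ^ (α - 1) :=
      mul_nonneg (rpow_nonneg (abs_nonneg _) _) (rpow_nonneg (abs_nonneg _) _)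
    rw [Real.norm_eq_abs, abs_of_nonneg hnn]
    exact hb

lemma kernel_bound {α : ℝ} (hα0 : 0 < α) (hα : α < 1/2) {r r' : ℝ} (hne : r' ≠ r) :
    (∫⁻ s in Ioi (0:ℝ),
        ENNReal.ofReal (|s - r| ^ (α - 1)) * ENNReal.ofReal (|s - r'| ^ (α - 1)))
      ≤ (∫⁻ t : ℝ, ENNReal.ofReal (|t| ^ (α - 1) * |1 - t| ^ (α - 1)))
          * ENNReal.ofReal (|r - r'| ^ (2 * α - 1)) := by
  set c : ℝ := r' - r with hc
  have hc0 : c ≠ 0 := sub_ne_zero.2 hne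
  have hcpos : (0:ℝ) < |c| := abs_pos.2 hc0
  set f : ℝ → ℝ≥0∞ :=
    fun u => ENNReal.ofReal (|u| ^ (α - 1)) * ENNReal.ofReal (|u - c| ^ (α - 1)) with hf
  have hfm : Measurable f := by
    rw [hf]; fun_prop
  set C : ℝ≥0∞ := ∫⁻ t : ℝ, ENNReal.ofReal (|t| ^ (α - 1) * |1 - t| ^ (α - 1)) with hC
  have step0 : (∫⁻ s in Ioi (0:ℝ),
      ENNReal.ofReal (|s - r| ^ (α - 1)) * ENNReal.ofReal (|s - r'| ^ (α - 1)))
      ≤ ∫⁻ s : ℝ, f (s + -r) := by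
    refine le_trans (setLIntegral_le_lintegral _ _) (le_of_eq (lintegral_congr fun s => ?_))
    rw [hf]
    have e1 : s + -r = s - r := by ring
    have e2 : s + -r - c = s - r' := by rw [hc]; ring
    rw [e1]
    simp only [e2]
    rw [← e1, e2]
  have step1 : (∫⁻ s : ℝ, f (s + -r)) = ∫⁻ u : ℝ, f u :=
    lintegral_add_right_eq_self f (-r)
  have step2 : (∫⁻ u : ℝ, f u) = ENNReal.ofReal |c| * ∫⁻ t : ℝ, f (c * t) := by
    have hmap := lintegral_map (μ := volume) hfm (measurable_const_mul c)
    rw [Real.map_volume_mul_left hc0, lintegral_smul_measure] at hmap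
    calc (∫⁻ u : ℝ, f u)
        = ENNReal.ofReal |c| * (ENNReal.ofReal |c⁻¹| * ∫⁻ u : ℝ, f u) := by
          rw [← mul_assoc, ← ENNReal.ofReal_mul (abs_nonneg c), abs_inv,
            mul_inv_cancel₀ (abs_ne_zero.2 hc0), ENNReal.ofReal_one, one_mul]
      _ = ENNReal.ofReal |c| * ∫⁻ t : ℝ, f (c * t) := by rw [← hmap]; rfl
  have keyR : ∀ t : ℝ, |c * t| ^ (α - 1) * |c * t - c| ^ (α - 1)
      = |c| ^ (2 * α - 2) * (|t| ^ (α - 1) * |1 - t| ^ (α - 1)) := by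
    intro t
    have h1 : |c * t| = |c| * |t| := abs_mul c t
    have h2 : |c * t - c| = |c| * |1 - t| := by
      rw [show c * t - c = c * (t - 1) by ring, abs_mul, abs_sub_comm t 1]
    rw [h1, h2, mul_rpow (abs_nonneg c) (abs_nonneg t), mul_rpow (abs_nonneg c) (abs_nonneg _),
      show (2 * α - 2 : ℝ) = (α - 1) + (α - 1) by ring, rpow_add hcpos]
    ring
  have step3 : (∫⁻ t : ℝ, f (c * t)) = ENNReal.ofReal (|c| ^ (2 * α - 2)) * C := by
    rw [hC, ← lintegral_const_mul' _ _ ENNReal.ofReal_ne_top]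
    refine lintegral_congr fun t => ?_
    simp only [hf]
    rw [← ENNReal.ofReal_mul (rpow_nonneg (abs_nonneg _) _), keyR t,
      ENNReal.ofReal_mul (rpow_nonneg (abs_nonneg _) _)]
  have habs : ENNReal.ofReal |c| * ENNReal.ofReal (|c| ^ (2 * α - 2))
      = ENNReal.ofReal (|r - r'| ^ (2 * α - 1)) := by
    rw [← ENNReal.ofReal_mul (abs_nonneg c)]
    congr 1
    rw [show |r - r'| = |c| by rw [hc, abs_sub_comm]]
    nth_rewrite 1 [← rpow_one |c|]
    rw [← rpow_add hcpos]
    ring_nf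
  calc (∫⁻ s in Ioi (0:ℝ),
      ENNReal.ofReal (|s - r| ^ (α - 1)) * ENNReal.ofReal (|s - r'| ^ (α - 1)))
      ≤ ∫⁻ s : ℝ, f (s + -r) := step0
    _ = ENNReal.ofReal |c| * (ENNReal.ofReal (|c| ^ (2 * α - 2)) * C) := by
        rw [step1, step2, step3]
    _ = C * ENNReal.ofReal (|r - r'| ^ (2 * α - 1)) := by
        rw [← mul_assoc, habs, mul_comm]


/-- For `α ∈ (0,1/2)` there is a constant `c` such that for every nonnegative
`v ∈ L²([0,1])`, `‖Ĩ_α v‖_{L²(ℝ₊)}² ≤ c·‖v‖_{L²[0,1]}·‖Ĩ_{2α} v‖_{L²(ℝ₊)}`, where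
`(Ĩ_α v)(s) = ∫₀¹ |s−r|^{α−1} v(r) dr`.  (Norms are expressed via lower Lebesgue
integrals so that the inequality also makes sense when `‖Ĩ_{2α} v‖` is infinite.) -/
theorem stmt9 (α : ℝ) (hα0 : 0 < α) (hα : α < 1/2) :
    ∃ c > (0:ℝ), ∀ v : ℝ → ℝ, Continuous v → (∀ r, 0 ≤ v r) →
      (∫⁻ s in Ioi (0:ℝ),
          ENNReal.ofReal ((∫ r in (0:ℝ)..1, |s - r| ^ (α - 1) * v r) ^ 2)) ≤
        ENNReal.ofReal c *
          ((∫⁻ r in Ioc (0:ℝ) 1, ENNReal.ofReal ((v r) ^ 2)) ^ ((1:ℝ)/2)) *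
          ((∫⁻ s in Ioi (0:ℝ),
              ENNReal.ofReal ((∫ r in (0:ℝ)..1, |s - r| ^ (2 * α - 1) * v r) ^ 2))
            ^ ((1:ℝ)/2)) := by
  have hγ1 : (-1:ℝ) < α - 1 := by linarith
  have hγ2 : (-1:ℝ) < 2 * α - 1 := by linarith
  set C : ℝ≥0∞ := ∫⁻ t : ℝ, ENNReal.ofReal (|t| ^ (α - 1) * |1 - t| ^ (α - 1)) with hCdef
  have hCfin : C ≠ ⊤ := (Cfin hα0 hα).lintegral_lt_top.ne
  refine ⟨C.toReal + 1, by positivity, ?_⟩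
  intro v hv hv0
  have mv : Measurable v := hv.measurable
  set g : ℝ → ℝ≥0∞ := fun x => ∫⁻ r' in Ioc (0:ℝ) 1,
      ENNReal.ofReal (|x - r'| ^ (2 * α - 1)) * ENNReal.ofReal (v r') with hgdef
  have mg : Measurable g := by
    rw [hgdef]
    exact Measurable.lintegral_prod_right' (f := fun p : ℝ × ℝ =>
      ENNReal.ofReal (|p.1 - p.2| ^ (2 * α - 1)) * ENNReal.ofReal (v p.2)) (by fun_prop)
  have mf : ∀ s : ℝ, Measurable fun r =>
      ENNReal.ofReal (|s - r| ^ (α - 1)) * ENNReal.ofReal (v r) := fun s => by fun_prop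
  -- Step A+B : rewrite the LHS as a triple lintegral
  have stepAB : (∫⁻ s in Ioi (0:ℝ),
        ENNReal.ofReal ((∫ r in (0:ℝ)..1, |s - r| ^ (α - 1) * v r) ^ 2))
      = ∫⁻ s in Ioi (0:ℝ), ∫⁻ r in Ioc (0:ℝ) 1, ∫⁻ r' in Ioc (0:ℝ) 1,
          (ENNReal.ofReal (|s - r| ^ (α - 1)) * ENNReal.ofReal (v r)) *
            (ENNReal.ofReal (|s - r'| ^ (α - 1)) * ENNReal.ofReal (v r')) := by
    refine lintegral_congr fun s => ?_
    rw [convertSq hγ1 hv hv0 s, pow_two, ← lintegral_mul_const _ (mf s)]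
    exact lintegral_congr fun r => (lintegral_const_mul _ (mf s)).symm
  -- measurability for the swaps
  have m1 : Measurable (Function.uncurry fun s r => ∫⁻ r' in Ioc (0:ℝ) 1,
      (ENNReal.ofReal (|s - r| ^ (α - 1)) * ENNReal.ofReal (v r)) *
        (ENNReal.ofReal (|s - r'| ^ (α - 1)) * ENNReal.ofReal (v r'))) := by
    have : (Function.uncurry fun s r => ∫⁻ r' in Ioc (0:ℝ) 1,
        (ENNReal.ofReal (|s - r| ^ (α - 1)) * ENNReal.ofReal (v r)) *
          (ENNReal.ofReal (|s - r'| ^ (α - 1)) * ENNReal.ofReal (v r')))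
        = fun p : ℝ × ℝ => ∫⁻ r' in Ioc (0:ℝ) 1,
        (ENNReal.ofReal (|p.1 - p.2| ^ (α - 1)) * ENNReal.ofReal (v p.2)) *
          (ENNReal.ofReal (|p.1 - r'| ^ (α - 1)) * ENNReal.ofReal (v r')) := rfl
    rw [this]
    exact Measurable.lintegral_prod_right' (f := fun q : (ℝ × ℝ) × ℝ =>
      (ENNReal.ofReal (|q.1.1 - q.1.2| ^ (α - 1)) * ENNReal.ofReal (v q.1.2)) *
        (ENNReal.ofReal (|q.1.1 - q.2| ^ (α - 1)) * ENNReal.ofReal (v q.2))) (by fun_prop)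
  have swap1 : (∫⁻ s in Ioi (0:ℝ), ∫⁻ r in Ioc (0:ℝ) 1, ∫⁻ r' in Ioc (0:ℝ) 1,
        (ENNReal.ofReal (|s - r| ^ (α - 1)) * ENNReal.ofReal (v r)) *
          (ENNReal.ofReal (|s - r'| ^ (α - 1)) * ENNReal.ofReal (v r')))
      = ∫⁻ r in Ioc (0:ℝ) 1, ∫⁻ s in Ioi (0:ℝ), ∫⁻ r' in Ioc (0:ℝ) 1,
        (ENNReal.ofReal (|s - r| ^ (α - 1)) * ENNReal.ofReal (v r)) *
          (ENNReal.ofReal (|s - r'| ^ (α - 1)) * ENNReal.ofReal (v r')) :=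
    lintegral_lintegral_swap m1.aemeasurable
  have swap2 : ∀ r : ℝ, (∫⁻ s in Ioi (0:ℝ), ∫⁻ r' in Ioc (0:ℝ) 1,
        (ENNReal.ofReal (|s - r| ^ (α - 1)) * ENNReal.ofReal (v r)) *
          (ENNReal.ofReal (|s - r'| ^ (α - 1)) * ENNReal.ofReal (v r')))
      = ∫⁻ r' in Ioc (0:ℝ) 1, ∫⁻ s in Ioi (0:ℝ),
        (ENNReal.ofReal (|s - r| ^ (α - 1)) * ENNReal.ofReal (v r)) *
          (ENNReal.ofReal (|s - r'| ^ (α - 1)) * ENNReal.ofReal (v r')) := by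
    intro r
    exact lintegral_lintegral_swap (by fun_prop)
  -- Step D : bound the innermost integral using the kernel bound
  have stepD : ∀ r : ℝ, (∫⁻ r' in Ioc (0:ℝ) 1, ∫⁻ s in Ioi (0:ℝ),
        (ENNReal.ofReal (|s - r| ^ (α - 1)) * ENNReal.ofReal (v r)) *
          (ENNReal.ofReal (|s - r'| ^ (α - 1)) * ENNReal.ofReal (v r')))
      ≤ (ENNReal.ofReal (v r) * C) * g r := by
    intro r
    have hae : ∀ᵐ r' ∂(volume.restrict (Ioc (0:ℝ) 1)), r' ≠ r := by
      refine ae_iff.2 ?_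
      have h1 : {x : ℝ | ¬ x ≠ r} = {r} := by ext x; simp
      rw [h1]
      refine le_antisymm (le_trans (Measure.restrict_apply_le _ _) ?_) zero_le
      simp [Real.volume_singleton]
    calc (∫⁻ r' in Ioc (0:ℝ) 1, ∫⁻ s in Ioi (0:ℝ),
        (ENNReal.ofReal (|s - r| ^ (α - 1)) * ENNReal.ofReal (v r)) *
          (ENNReal.ofReal (|s - r'| ^ (α - 1)) * ENNReal.ofReal (v r')))
        ≤ ∫⁻ r' in Ioc (0:ℝ) 1, (ENNReal.ofReal (v r) * ENNReal.ofReal (v r')) *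
            (C * ENNReal.ofReal (|r - r'| ^ (2 * α - 1))) := by
          refine lintegral_mono_ae (hae.mono fun r' hne => ?_)
          calc (∫⁻ s in Ioi (0:ℝ),
              (ENNReal.ofReal (|s - r| ^ (α - 1)) * ENNReal.ofReal (v r)) *
                (ENNReal.ofReal (|s - r'| ^ (α - 1)) * ENNReal.ofReal (v r')))
              = ∫⁻ s in Ioi (0:ℝ), (ENNReal.ofReal (v r) * ENNReal.ofReal (v r')) *
                  (ENNReal.ofReal (|s - r| ^ (α - 1)) * ENNReal.ofReal (|s - r'| ^ (α - 1))) :=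
                lintegral_congr fun s => by ring
            _ = (ENNReal.ofReal (v r) * ENNReal.ofReal (v r')) *
                  ∫⁻ s in Ioi (0:ℝ),
                    ENNReal.ofReal (|s - r| ^ (α - 1)) * ENNReal.ofReal (|s - r'| ^ (α - 1)) :=
                lintegral_const_mul' _ _
                  (ENNReal.mul_ne_top ENNReal.ofReal_ne_top ENNReal.ofReal_ne_top)
            _ ≤ (ENNReal.ofReal (v r) * ENNReal.ofReal (v r')) *
                  (C * ENNReal.ofReal (|r - r'| ^ (2 * α - 1))) :=
                mul_le_mul_right (kernel_bound hα0 hα hne) _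
      _ = (ENNReal.ofReal (v r) * C) * g r := by
          rw [hgdef, ← lintegral_const_mul' _ _
            (ENNReal.mul_ne_top ENNReal.ofReal_ne_top hCfin)]
          exact lintegral_congr fun r' => by ring
  -- pointwise identities for the two factors
  have hWsq : ∀ r : ℝ, ENNReal.ofReal (v r) ^ (2:ℝ) = ENNReal.ofReal (v r ^ 2) := fun r => by
    rw [ENNReal.ofReal_pow (hv0 r), ← ENNReal.rpow_natCast (ENNReal.ofReal (v r)) 2]
    norm_num
  have hgsq : ∀ x : ℝ, g x ^ (2:ℝ)
      = ENNReal.ofReal ((∫ r in (0:ℝ)..1, |x - r| ^ (2 * α - 1) * v r) ^ 2) := fun x => by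
    rw [convertSq hγ2 hv hv0 x, hgdef, ← ENNReal.rpow_natCast _ 2]
    norm_num
  -- Cauchy-Schwarz
  have hCS : (∫⁻ r in Ioc (0:ℝ) 1, ENNReal.ofReal (v r) * g r)
      ≤ (∫⁻ r in Ioc (0:ℝ) 1, ENNReal.ofReal (v r) ^ (2:ℝ)) ^ ((1:ℝ)/2) *
        (∫⁻ r in Ioc (0:ℝ) 1, g r ^ (2:ℝ)) ^ ((1:ℝ)/2) := by
    have h22 : (2:ℝ).HolderConjugate 2 := Real.holderConjugate_iff.mpr ⟨one_lt_two, by norm_num⟩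
    have := ENNReal.lintegral_mul_le_Lp_mul_Lq (volume.restrict (Ioc (0:ℝ) 1)) h22
      (mv.ennreal_ofReal.aemeasurable) mg.aemeasurable
    simpa using this
  have stepF : (∫⁻ r in Ioc (0:ℝ) 1, g r ^ (2:ℝ))
      ≤ ∫⁻ s in Ioi (0:ℝ),
          ENNReal.ofReal ((∫ r in (0:ℝ)..1, |s - r| ^ (2 * α - 1) * v r) ^ 2) := by
    rw [lintegral_congr hgsq]
    exact lintegral_mono_set (fun x hx => hx.1)
  have hfact2 : (∫⁻ r in Ioc (0:ℝ) 1, ENNReal.ofReal (v r) ^ (2:ℝ))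
      = ∫⁻ r in Ioc (0:ℝ) 1, ENNReal.ofReal (v r ^ 2) := lintegral_congr hWsq
  have hCle : C ≤ ENNReal.ofReal (C.toReal + 1) := by
    conv_lhs => rw [← ENNReal.ofReal_toReal hCfin]
    exact ENNReal.ofReal_le_ofReal (by linarith [ENNReal.toReal_nonneg (a := C)])
  calc (∫⁻ s in Ioi (0:ℝ),
        ENNReal.ofReal ((∫ r in (0:ℝ)..1, |s - r| ^ (α - 1) * v r) ^ 2))
      = ∫⁻ r in Ioc (0:ℝ) 1, ∫⁻ s in Ioi (0:ℝ), ∫⁻ r' in Ioc (0:ℝ) 1,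
          (ENNReal.ofReal (|s - r| ^ (α - 1)) * ENNReal.ofReal (v r)) *
            (ENNReal.ofReal (|s - r'| ^ (α - 1)) * ENNReal.ofReal (v r')) := by
        rw [stepAB, swap1]
    _ = ∫⁻ r in Ioc (0:ℝ) 1, ∫⁻ r' in Ioc (0:ℝ) 1, ∫⁻ s in Ioi (0:ℝ),
          (ENNReal.ofReal (|s - r| ^ (α - 1)) * ENNReal.ofReal (v r)) *
            (ENNReal.ofReal (|s - r'| ^ (α - 1)) * ENNReal.ofReal (v r')) :=
        lintegral_congr fun r => swap2 r
    _ ≤ ∫⁻ r in Ioc (0:ℝ) 1, (ENNReal.ofReal (v r) * C) * g r := lintegral_mono stepD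
    _ = C * ∫⁻ r in Ioc (0:ℝ) 1, ENNReal.ofReal (v r) * g r := by
        rw [← lintegral_const_mul' _ _ hCfin]
        exact lintegral_congr fun r => by ring
    _ ≤ C * ((∫⁻ r in Ioc (0:ℝ) 1, ENNReal.ofReal (v r) ^ (2:ℝ)) ^ ((1:ℝ)/2) *
          (∫⁻ r in Ioc (0:ℝ) 1, g r ^ (2:ℝ)) ^ ((1:ℝ)/2)) := mul_le_mul_right hCS C
    _ ≤ ENNReal.ofReal (C.toReal + 1) *
          ((∫⁻ r in Ioc (0:ℝ) 1, ENNReal.ofReal ((v r) ^ 2)) ^ ((1:ℝ)/2)) *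
          ((∫⁻ s in Ioi (0:ℝ),
              ENNReal.ofReal ((∫ r in (0:ℝ)..1, |s - r| ^ (2 * α - 1) * v r) ^ 2))
            ^ ((1:ℝ)/2)) := by
        rw [mul_assoc]
        refine mul_le_mul' hCle (mul_le_mul' (le_of_eq (by rw [hfact2]))
          (ENNReal.rpow_le_rpow stepF (by norm_num)))
end

section
/- Let H ∈ (1/4, 1/2). Define, for 0 ≤ s ≤ r₁ ≤ r₂ ≤ t, g^{(1)}_{s,t}(r₁,r₂) = 2∫_{r₂}^t (v−r₂)^{H−3/2}∫_{r₂}^v (u−r₁)^{H−3/2} du dv. Then there exists a constant M depending only on H such that the L² norm of g^{(1)}_{s,t} over the simplex {s < r₁ < r₂ < t} is bounded by M·|t−s|^{2H}. -/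
open Set MeasureTheory intervalIntegral
open scoped ENNReal

lemma aux_int1 {p : ℝ} (hp : -1 < p) (c a b : ℝ) :
    IntervalIntegrable (fun x => (x - c) ^ p) volume a b := by
  simpa using (intervalIntegrable_rpow' hp (a := a - c) (b := b - c)).comp_sub_right c

lemma aux_val1 {p : ℝ} (hp : -1 < p) (c b : ℝ) :
    ∫ x in c..b, (x - c) ^ p = (b - c) ^ (p + 1) / (p + 1) := by
  rw [show (∫ x in c..b, (x - c) ^ p) = ∫ x in c - c..b - c, x ^ p from
      integral_comp_sub_right (fun x => x ^ p) c,
    integral_rpow (Or.inl hp), sub_self, Real.zero_rpow (by linarith), sub_zero]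

lemma aux_int2 {p : ℝ} (hp : -1 < p) (c a b : ℝ) :
    IntervalIntegrable (fun x => (c - x) ^ p) volume a b := by
  simpa using (intervalIntegrable_rpow' hp (a := c - a) (b := c - b)).comp_sub_left c

lemma aux_val2 {p : ℝ} (hp : -1 < p) (c a : ℝ) :
    ∫ x in a..c, (c - x) ^ p = (c - a) ^ (p + 1) / (p + 1) := by
  rw [show (∫ x in a..c, (c - x) ^ p) = ∫ x in c - c..c - a, x ^ p from
      integral_comp_sub_left (fun x => x ^ p) c,
    integral_rpow (Or.inl hp), sub_self, Real.zero_rpow (by linarith), sub_zero]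

lemma inner_bd {H : ℝ} (hH : H ∈ Ioo (1/4 : ℝ) (1/2)) {r1 r2 v : ℝ}
    (h12 : r1 < r2) (h2v : r2 ≤ v) :
    |∫ u in r2..v, (u - r1) ^ (H - 3/2)| ≤
      4 * ((r2 - r1) ^ (H - 3/4) * (v - r2) ^ ((1:ℝ)/4)) := by
  obtain ⟨hH1, hH2⟩ := hH
  have hb : IntervalIntegrable (fun u => (r2 - r1) ^ (H - 3/4) * (u - r2) ^ (-(3:ℝ)/4))
      volume r2 v := (aux_int1 (by norm_num) r2 r2 v).const_mul _
  have key : ‖∫ u in r2..v, (u - r1) ^ (H - 3/2)‖ ≤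
      |∫ u in r2..v, (r2 - r1) ^ (H - 3/4) * (u - r2) ^ (-(3:ℝ)/4)| := by
    apply intervalIntegral.norm_integral_le_abs_of_norm_le _ hb
    filter_upwards [ae_restrict_mem measurableSet_uIoc] with u hu
    rw [uIoc_of_le h2v] at hu
    have hur2 : 0 < u - r2 := by simp at hu; linarith [hu.1]
    have hur1 : 0 < u - r1 := by linarith
    have h1 : (u - r1) ^ (H - 3/2) = (u - r1) ^ (H - 3/4) * (u - r1) ^ (-(3:ℝ)/4) := by
      rw [← Real.rpow_add hur1]; ring_nf
    rw [Real.norm_eq_abs, abs_of_nonneg (Real.rpow_nonneg hur1.le _), h1]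
    apply mul_le_mul
    · exact Real.rpow_le_rpow_of_nonpos (by linarith) (by linarith) (by linarith)
    · exact Real.rpow_le_rpow_of_nonpos hur2 (by linarith) (by norm_num)
    · exact Real.rpow_nonneg hur1.le _
    · exact Real.rpow_nonneg (by linarith) _
  rw [Real.norm_eq_abs] at key
  refine key.trans ?_
  rw [intervalIntegral.integral_const_mul, aux_val1 (by norm_num) r2 v]
  have h2 : (-(3:ℝ)/4 + 1) = 1/4 := by norm_num
  rw [h2]
  have hvr : (0:ℝ) ≤ v - r2 := by linarith
  have hrr : (0:ℝ) ≤ r2 - r1 := by linarith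
  rw [abs_of_nonneg (by positivity)]
  rw [div_eq_mul_inv]
  ring_nf
  nlinarith [Real.rpow_nonneg (sub_nonneg.2 h2v) ((1:ℝ)/4), Real.rpow_nonneg (sub_nonneg.2 h12.le) (H - 3/4)]

lemma outer_bd {H : ℝ} (hH : H ∈ Ioo (1/4 : ℝ) (1/2)) {r1 r2 t : ℝ}
    (h12 : r1 < r2) (h2t : r2 ≤ t) :
    |∫ v in r2..t, (v - r2) ^ (H - 3/2) * ∫ u in r2..v, (u - r1) ^ (H - 3/2)| ≤
      4 / (H - 1/4) * ((r2 - r1) ^ (H - 3/4) * (t - r2) ^ (H - 1/4)) := by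
  obtain ⟨hH1, hH2⟩ := hH
  have hb : IntervalIntegrable
      (fun v => 4 * (r2 - r1) ^ (H - 3/4) * (v - r2) ^ (H - 5/4)) volume r2 t :=
    (aux_int1 (by linarith) r2 r2 t).const_mul _
  have key : ‖∫ v in r2..t, (v - r2) ^ (H - 3/2) * ∫ u in r2..v, (u - r1) ^ (H - 3/2)‖ ≤
      |∫ v in r2..t, 4 * (r2 - r1) ^ (H - 3/4) * (v - r2) ^ (H - 5/4)| := by
    apply intervalIntegral.norm_integral_le_abs_of_norm_le _ hb
    filter_upwards [ae_restrict_mem measurableSet_uIoc] with v hv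
    rw [uIoc_of_le h2t] at hv
    have hvr2 : 0 < v - r2 := by simp at hv; linarith [hv.1]
    have h1 := inner_bd (H := H) ⟨hH1, hH2⟩ h12 (r2 := r2) (v := v) (by linarith)
    rw [norm_mul, Real.norm_eq_abs, Real.norm_eq_abs,
      abs_of_nonneg (Real.rpow_nonneg hvr2.le _)]
    calc (v - r2) ^ (H - 3/2) * |∫ u in r2..v, (u - r1) ^ (H - 3/2)|
        ≤ (v - r2) ^ (H - 3/2) * (4 * ((r2 - r1) ^ (H - 3/4) * (v - r2) ^ ((1:ℝ)/4))) :=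
          mul_le_mul_of_nonneg_left h1 (Real.rpow_nonneg hvr2.le _)
      _ = 4 * (r2 - r1) ^ (H - 3/4) * ((v - r2) ^ (H - 3/2) * (v - r2) ^ ((1:ℝ)/4)) := by ring
      _ = 4 * (r2 - r1) ^ (H - 3/4) * (v - r2) ^ (H - 5/4) := by
          rw [← Real.rpow_add hvr2]; ring_nf
  rw [Real.norm_eq_abs] at key
  refine key.trans ?_
  rw [intervalIntegral.integral_const_mul, aux_val1 (by linarith) r2 t]
  have h2 : (H - 5/4 + 1) = H - 1/4 := by ring
  rw [h2]
  have htr : (0:ℝ) ≤ t - r2 := by linarith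
  have hrr : (0:ℝ) ≤ r2 - r1 := by linarith
  have hH4 : (0:ℝ) < H - 1/4 := by linarith
  rw [abs_of_nonneg (by positivity)]
  rw [div_eq_mul_inv, div_eq_mul_inv]
  ring_nf
  nlinarith [Real.rpow_nonneg htr (H - 1/4), Real.rpow_nonneg hrr (H - 3/4),
    mul_pos hH4 hH4, inv_nonneg.2 hH4.le,
    mul_nonneg (Real.rpow_nonneg hrr (H - 3/4)) (Real.rpow_nonneg htr (H - 1/4))]

lemma sq_rpow {x : ℝ} (hx : 0 ≤ x) (e : ℝ) : (x ^ e) ^ 2 = x ^ (2 * e) := by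
  rw [← Real.rpow_natCast (x ^ e) 2, ← Real.rpow_mul hx]
  norm_num [mul_comm]


/-- For `H ∈ (1/4,1/2)`, the function
`g¹_{s,t}(r₁,r₂) = 2∫_{r₂}^t (v−r₂)^{H−3/2}∫_{r₂}^v (u−r₁)^{H−3/2} du dv`
has `L²` norm over the simplex `{s < r₁ < r₂ < t}` bounded by `M·|t−s|^{2H}`,
with `M` depending only on `H`. -/
theorem stmt14 (H : ℝ) (hH : H ∈ Ioo (1/4 : ℝ) (1/2)) :
    ∃ M > (0:ℝ), ∀ s t : ℝ, s ≤ t →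
      (∫⁻ r2 in Ioc s t, ∫⁻ r1 in Ioc s r2, ENNReal.ofReal
          ((2 * ∫ v in r2..t, (v - r2) ^ (H - 3/2) *
              ∫ u in r2..v, (u - r1) ^ (H - 3/2)) ^ 2)) ≤
        ENNReal.ofReal ((M * (t - s) ^ (2 * H)) ^ 2) := by
  obtain ⟨hH1, hH2⟩ := hH
  have hH4 : (0:ℝ) < H - 1/4 := by linarith
  have hp1 : (0:ℝ) < 2*H - 1/2 := by linarith
  have hp2 : (0:ℝ) < 2*H + 1/2 := by linarith
  set K2 : ℝ := 64 / (H - 1/4)^2 with hK2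
  have hK2pos : 0 < K2 := by positivity
  set Marg : ℝ := K2 / (2*H - 1/2) / (2*H + 1/2) with hMarg
  have hMargpos : 0 < Marg := by positivity
  refine ⟨Real.sqrt Marg, Real.sqrt_pos.2 hMargpos, fun s t hst => ?_⟩
  set M := Real.sqrt Marg with hM
  have hMsq : M ^ 2 = Marg := Real.sq_sqrt hMargpos.le
  rcases eq_or_lt_of_le hst with rfl | hst'
  · simp
  have hts : (0:ℝ) < t - s := by linarith
  set C2 : ℝ := K2 * (t - s) ^ (2*H - 1/2) / (2*H - 1/2) with hC2
  have hC2nn : 0 ≤ C2 := by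
    have := Real.rpow_nonneg hts.le (2*H - 1/2); positivity
  calc (∫⁻ r2 in Ioc s t, ∫⁻ r1 in Ioc s r2, ENNReal.ofReal
          ((2 * ∫ v in r2..t, (v - r2) ^ (H - 3/2) *
              ∫ u in r2..v, (u - r1) ^ (H - 3/2)) ^ 2))
      ≤ ∫⁻ r2 in Ioc s t, ENNReal.ofReal (C2 * (t - r2) ^ (2*H - 1/2)) := by
        apply lintegral_mono_ae
        filter_upwards [ae_restrict_mem measurableSet_Ioc] with r2 hr2
        obtain ⟨hsr2, hr2t⟩ := hr2
        -- inner integral bound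
        have step1 : (∫⁻ r1 in Ioc s r2, ENNReal.ofReal
              ((2 * ∫ v in r2..t, (v - r2) ^ (H - 3/2) *
                ∫ u in r2..v, (u - r1) ^ (H - 3/2)) ^ 2)) =
            ∫⁻ r1 in Ioo s r2, ENNReal.ofReal
              ((2 * ∫ v in r2..t, (v - r2) ^ (H - 3/2) *
                ∫ u in r2..v, (u - r1) ^ (H - 3/2)) ^ 2) :=
          (setLIntegral_congr Ioo_ae_eq_Ioc).symm
        rw [step1]
        have step2 : (∫⁻ r1 in Ioo s r2, ENNReal.ofReal
              ((2 * ∫ v in r2..t, (v - r2) ^ (H - 3/2) *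
                ∫ u in r2..v, (u - r1) ^ (H - 3/2)) ^ 2)) ≤
            ∫⁻ r1 in Ioo s r2, ENNReal.ofReal
              (K2 * (t - r2) ^ (2*H - 1/2) * (r2 - r1) ^ (2*H - 3/2)) := by
          apply lintegral_mono_ae
          filter_upwards [ae_restrict_mem measurableSet_Ioo] with r1 hr1
          obtain ⟨hsr1, hr12⟩ := hr1
          apply ENNReal.ofReal_le_ofReal
          have hob := outer_bd ⟨hH1, hH2⟩ hr12 hr2t
          have habs : |2 * ∫ v in r2..t, (v - r2) ^ (H - 3/2) *
              ∫ u in r2..v, (u - r1) ^ (H - 3/2)| ≤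
              2 * (4 / (H - 1/4) * ((r2 - r1) ^ (H - 3/4) * (t - r2) ^ (H - 1/4))) := by
            rw [abs_mul, abs_two]; linarith
          have hsq := sq_le_sq' (neg_le_of_abs_le habs) (le_of_abs_le habs)
          refine hsq.trans_eq ?_
          have e1 : ((r2 - r1) ^ (H - 3/4)) ^ 2 = (r2 - r1) ^ (2*H - 3/2) := by
            rw [sq_rpow (by linarith) (H - 3/4)]; ring_nf
          have e2 : ((t - r2) ^ (H - 1/4)) ^ 2 = (t - r2) ^ (2*H - 1/2) := by
            rw [sq_rpow (by linarith) (H - 1/4)]; ring_nf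
          rw [mul_pow, mul_pow, mul_pow, e1, e2, hK2, div_pow]
          ring
        refine step2.trans ?_
        have hint : IntegrableOn (fun r1 => K2 * (t - r2) ^ (2*H - 1/2) *
            (r2 - r1) ^ (2*H - 3/2)) (Ioo s r2) volume := by
          have h1 : IntervalIntegrable (fun r1 => K2 * (t - r2) ^ (2*H - 1/2) *
              (r2 - r1) ^ (2*H - 3/2)) volume s r2 :=
            (aux_int2 (by linarith) r2 s r2).const_mul _
          exact ((intervalIntegrable_iff_integrableOn_Ioc_of_le hsr2.le).1 h1).mono_set
            Ioo_subset_Ioc_self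
        have hnn : 0 ≤ᵐ[volume.restrict (Ioo s r2)] fun r1 =>
            K2 * (t - r2) ^ (2*H - 1/2) * (r2 - r1) ^ (2*H - 3/2) := by
          filter_upwards [ae_restrict_mem measurableSet_Ioo] with r1 hr1
          exact mul_nonneg (mul_nonneg hK2pos.le (Real.rpow_nonneg (by linarith) _))
            (Real.rpow_nonneg (by linarith [hr1.2]) _)
        rw [← MeasureTheory.ofReal_integral_eq_lintegral_ofReal hint hnn]
        apply ENNReal.ofReal_le_ofReal
        rw [← MeasureTheory.integral_Ioc_eq_integral_Ioo,
          ← intervalIntegral.integral_of_le hsr2.le,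
          intervalIntegral.integral_const_mul, aux_val2 (by linarith) r2 s]
        have e3 : (2*H - 3/2 + 1) = 2*H - 1/2 := by ring
        rw [e3]
        have hle : (r2 - s) ^ (2*H - 1/2) ≤ (t - s) ^ (2*H - 1/2) :=
          Real.rpow_le_rpow (by linarith) (by linarith) hp1.le
        have h0 : 0 ≤ K2 * (t - r2) ^ (2*H - 1/2) :=
          mul_nonneg hK2pos.le (Real.rpow_nonneg (by linarith) _)
        calc K2 * (t - r2) ^ (2*H - 1/2) * ((r2 - s) ^ (2*H - 1/2) / (2*H - 1/2))
            ≤ K2 * (t - r2) ^ (2*H - 1/2) * ((t - s) ^ (2*H - 1/2) / (2*H - 1/2)) := by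
              apply mul_le_mul_of_nonneg_left _ h0
              gcongr
          _ = C2 * (t - r2) ^ (2*H - 1/2) := by rw [hC2]; ring
    _ = ENNReal.ofReal (C2 * ((t - s) ^ (2*H + 1/2) / (2*H + 1/2))) := by
        have hint : IntegrableOn (fun r2 => C2 * (t - r2) ^ (2*H - 1/2)) (Ioc s t) volume := by
          have h1 : IntervalIntegrable (fun r2 => C2 * (t - r2) ^ (2*H - 1/2))
              volume s t := (aux_int2 (by linarith) t s t).const_mul _
          exact (intervalIntegrable_iff_integrableOn_Ioc_of_le hst).1 h1
        have hnn : 0 ≤ᵐ[volume.restrict (Ioc s t)] fun r2 =>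
            C2 * (t - r2) ^ (2*H - 1/2) := by
          filter_upwards [ae_restrict_mem measurableSet_Ioc] with r2 hr2
          exact mul_nonneg hC2nn (Real.rpow_nonneg (by linarith [hr2.2]) _)
        rw [← MeasureTheory.ofReal_integral_eq_lintegral_ofReal hint hnn,
          ← intervalIntegral.integral_of_le hst,
          intervalIntegral.integral_const_mul, aux_val2 (by linarith) t s]
        have e3 : (2*H - 1/2 + 1) = 2*H + 1/2 := by ring
        rw [e3]
    _ ≤ ENNReal.ofReal ((M * (t - s) ^ (2 * H)) ^ 2) := by
        apply ENNReal.ofReal_le_ofReal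
        rw [mul_pow, hMsq, sq_rpow hts.le (2*H)]
        have hadd : (t - s) ^ (2*H - 1/2) * (t - s) ^ (2*H + 1/2) = (t - s) ^ (2*(2*H)) := by
          rw [← Real.rpow_add hts]; ring_nf
        rw [hC2, hMarg, hK2, ← hadd]
        apply le_of_eq
        field_simp
end

section
/- Let γ ∈ (1/3, 1/2], let (X,𝕏) be a γ-Hölder rough path on [0,T] in ℝᵈ, and let h : [0,T] → ℝᵈ be of bounded variation with the property that the total variation of h on each interval [s,t] is at most ‖h‖_{1;γ}·|t−s|^γ. Define the translated rough path τ_h(X,𝕏) = (Y,𝕐) by Y_t = X_t + h_t and 𝕐_{s,t} = 𝕏_{s,t} + ∫ₛᵗ δX_{s,r}⊗dh_r + ∫ₛᵗ δh_{s,r}⊗dX_r + ∫ₛᵗ δh_{s,r}⊗dh_r (Riemann–Stieltjes integrals). Then there exists M depending on T such that ‖Y−X‖_γ ≤ ‖h‖_{1;γ} and ‖𝕐−𝕏‖_{2γ} ≤ M·‖h‖_{1;γ}·(‖h‖_{1;γ} + ‖X‖_γ). -/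
open Set

/-- `I` is the Riemann–Stieltjes integral `∫ₛᵗ f dg`, as a limit of Riemann sums over
partitions of `[s,t]` of small mesh. -/
def IsRS (f g : ℝ → ℝ) (s t I : ℝ) : Prop :=
  ∀ ε > (0:ℝ), ∃ δ > (0:ℝ), ∀ n : ℕ, ∀ p : ℕ → ℝ,
    p 0 = s → p n = t → (∀ i < n, p i ≤ p (i + 1)) → (∀ i < n, p (i + 1) - p i < δ) →
    |(∑ i ∈ Finset.range n, f (p i) * (g (p (i + 1)) - g (p i))) - I| < ε

lemma coord_abs_le_norm {d : ℕ} (x : EuclideanSpace ℝ (Fin d)) (i : Fin d) : |x i| ≤ ‖x‖ := by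
  rw [EuclideanSpace.norm_eq]
  calc |x i| = Real.sqrt (‖x i‖ ^ 2) := by rw [Real.sqrt_sq_eq_abs, abs_norm, Real.norm_eq_abs]
    _ ≤ _ := Real.sqrt_le_sqrt (Finset.single_le_sum (f := fun j => ‖x j‖ ^ 2)
        (fun j _ => sq_nonneg _) (Finset.mem_univ i))

lemma pmono {n : ℕ} {p : ℕ → ℝ} (hp : ∀ i < n, p i ≤ p (i + 1)) :
    ∀ {i j : ℕ}, i ≤ j → j ≤ n → p i ≤ p j := by
  intro i j hij hjn
  induction j with
  | zero => simp [Nat.le_zero.mp hij]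
  | succ k ih =>
    rcases Nat.lt_or_ge i (k + 1) with hik | hik
    · exact (ih (Nat.lt_succ_iff.mp hik) (le_of_lt hjn)).trans (hp k hjn)
    · have : i = k + 1 := le_antisymm hij hik
      simp [this]

lemma rs_abs_le {f g : ℝ → ℝ} {s t I B : ℝ} (hst : s ≤ t) (hRS : IsRS f g s t I)
    (hB : ∀ n : ℕ, ∀ p : ℕ → ℝ, p 0 = s → p n = t → (∀ i < n, p i ≤ p (i + 1)) →
      |∑ i ∈ Finset.range n, f (p i) * (g (p (i + 1)) - g (p i))| ≤ B) :
    |I| ≤ B := by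
  refine le_of_forall_pos_le_add fun ε hε => ?_
  obtain ⟨δ, hδ, H⟩ := hRS ε hε
  set n : ℕ := ⌈(t - s) / δ⌉₊ + 1 with hn
  have hn0 : (0:ℝ) < (n : ℝ) := by positivity
  have hmesh : (t - s) / n < δ := by
    rw [div_lt_iff₀ hn0]
    have h1 : (t - s) / δ ≤ (⌈(t - s) / δ⌉₊ : ℝ) := Nat.le_ceil _
    have h2 : ((⌈(t - s) / δ⌉₊ : ℝ)) < (n : ℝ) := by
      rw [hn]; push_cast; linarith
    have := (div_lt_iff₀ hδ).mp (lt_of_le_of_lt h1 h2)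
    linarith [this, mul_comm ((n:ℕ):ℝ) δ]
  obtain ⟨p, hp⟩ : ∃ p : ℕ → ℝ, p = fun i : ℕ => s + (i : ℝ) * ((t - s) / n) := ⟨_, rfl⟩
  have hstep : ∀ i : ℕ, p (i + 1) - p i = (t - s) / n := by
    intro i; rw [hp]; push_cast; ring
  have h0 : p 0 = s := by rw [hp]; simp
  have hnt : p n = t := by
    rw [hp]
    field_simp
    ring
  have hmono : ∀ i < n, p i ≤ p (i + 1) := by
    intro i _
    have : (0:ℝ) ≤ (t - s) / n := div_nonneg (by linarith) hn0.le
    linarith [hstep i, this]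
  have hm : ∀ i < n, p (i + 1) - p i < δ := fun i _ => by rw [hstep]; exact hmesh
  have hS := H n p h0 hnt hmono hm
  have hSB := hB n p h0 hnt hmono
  calc |I| ≤ |∑ i ∈ Finset.range n, f (p i) * (g (p (i + 1)) - g (p i))|
      + |(∑ i ∈ Finset.range n, f (p i) * (g (p (i + 1)) - g (p i))) - I| := by
        have h2 := abs_sub_abs_le_abs_sub I (∑ i ∈ Finset.range n, f (p i) * (g (p (i + 1)) - g (p i)))
        have h3 := abs_sub_comm I (∑ i ∈ Finset.range n, f (p i) * (g (p (i + 1)) - g (p i)))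
        linarith
    _ ≤ B + ε := add_le_add hSB hS.le

lemma sum_norm_le {d : ℕ} (h : ℝ → EuclideanSpace ℝ (Fin d)) {s t C : ℝ} (hC : 0 ≤ C)
    (hvar : eVariationOn h (Icc s t) ≤ ENNReal.ofReal C)
    {n : ℕ} {p : ℕ → ℝ} (h0 : p 0 = s) (hn : p n = t) (hmono : ∀ i < n, p i ≤ p (i + 1)) :
    ∑ i ∈ Finset.range n, ‖h (p (i + 1)) - h (p i)‖ ≤ C := by
  have humono : Monotone (fun i : ℕ => p (min i n)) := fun i j hij =>
    pmono hmono (min_le_min hij le_rfl) (min_le_right _ _)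
  have humem : ∀ i : ℕ, p (min i n) ∈ Icc s t := by
    intro i
    constructor
    · rw [← h0]; exact pmono hmono (Nat.zero_le _) (min_le_right _ _)
    · rw [← hn]; exact pmono hmono (min_le_right _ _) le_rfl
  have key := (eVariationOn.sum_le (f := h) (n := n) humono humem).trans hvar
  have hEq : ∀ i ∈ Finset.range n,
      edist (h (p (min (i + 1) n))) (h (p (min i n))) = ENNReal.ofReal ‖h (p (i + 1)) - h (p i)‖ := by
    intro i hi
    rw [Finset.mem_range] at hi
    rw [min_eq_left hi, min_eq_left hi.le, edist_dist, dist_eq_norm]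
  rw [Finset.sum_congr rfl hEq,
    ← ENNReal.ofReal_sum_of_nonneg (fun i _ => norm_nonneg _)] at key
  exact (ENNReal.ofReal_le_ofReal_iff hC).mp key

lemma abel_sum (f g : ℕ → ℝ) (n : ℕ) (hf0 : f 0 = 0) :
    ∑ i ∈ Finset.range n, f i * (g (i + 1) - g i)
      = ∑ i ∈ Finset.range n, (f (i + 1) - f i) * (g n - g (i + 1)) := by
  have key : ∑ i ∈ Finset.range n, (f i * (g (i + 1) - g i))
      - ∑ i ∈ Finset.range n, ((f (i + 1) - f i) * (g n - g (i + 1))) = 0 := by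
    rw [← Finset.sum_sub_distrib]
    have hc : ∀ i ∈ Finset.range n,
        f i * (g (i + 1) - g i) - (f (i + 1) - f i) * (g n - g (i + 1))
          = (f (i + 1) * g (i + 1) - f i * g i) - (f (i + 1) - f i) * g n :=
      fun i _ => by ring
    rw [Finset.sum_congr rfl hc, Finset.sum_sub_distrib,
      Finset.sum_range_sub (fun i => f i * g i), ← Finset.sum_mul,
      Finset.sum_range_sub f, hf0]
    ring
  linarith

/-- Translation of a rough path by a path `h` of bounded variation with
`Var_{[s,t]}(h) ≤ ‖h‖_{1;γ}·|t−s|^γ`.  With `Y = X + h` and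
`𝕐 = 𝕏 + ∫δX⊗dh + ∫δh⊗dX + ∫δh⊗dh` (entrywise Riemann–Stieltjes integrals
`I1, I2, I3`), one has `‖Y−X‖_γ ≤ ‖h‖_{1;γ}` and
`‖𝕐−𝕏‖_{2γ} ≤ M·‖h‖_{1;γ}·(‖h‖_{1;γ} + ‖X‖_γ)` for a constant `M` depending on `T`.
Here `Ch = ‖h‖_{1;γ}` and `CX` bounds the `γ`-Hölder seminorm of `X`. -/
theorem stmt16 (d : ℕ) (γ T : ℝ) (hγ : γ ∈ Ioc (1/3 : ℝ) (1/2)) (hT : 0 < T) :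
    ∃ M > (0:ℝ), ∀ (X : ℝ → EuclideanSpace ℝ (Fin d))
      (XX : ℝ → ℝ → Matrix (Fin d) (Fin d) ℝ)
      (h : ℝ → EuclideanSpace ℝ (Fin d)) (Ch CX : ℝ)
      (I1 I2 I3 : ℝ → ℝ → Matrix (Fin d) (Fin d) ℝ),
      0 ≤ Ch → 0 ≤ CX →
      -- `X` is γ-Hölder with seminorm bound `CX`
      (∀ s ∈ Icc (0:ℝ) T, ∀ t ∈ Icc (0:ℝ) T, ‖X t - X s‖ ≤ CX * |t - s| ^ γ) →
      -- Chen's relation for `(X,𝕏)`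
      (∀ s u t : ℝ, 0 ≤ s → s ≤ u → u ≤ t → t ≤ T → ∀ i j : Fin d,
        XX s t i j - XX u t i j - XX s u i j = (X u i - X s i) * (X t j - X u j)) →
      -- `h` has variation bounded by `Ch·|t−s|^γ` on subintervals of `[0,T]`
      (∀ s t : ℝ, 0 ≤ s → s ≤ t → t ≤ T →
        eVariationOn h (Icc s t) ≤ ENNReal.ofReal (Ch * (t - s) ^ γ)) →
      -- the three Riemann–Stieltjes integrals defining the translated area
      (∀ s t : ℝ, 0 ≤ s → s ≤ t → t ≤ T → ∀ i j : Fin d,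
        IsRS (fun r => X r i - X s i) (fun r => h r j) s t (I1 s t i j) ∧
        IsRS (fun r => h r i - h s i) (fun r => X r j) s t (I2 s t i j) ∧
        IsRS (fun r => h r i - h s i) (fun r => h r j) s t (I3 s t i j)) →
      -- conclusion: `‖Y − X‖_γ ≤ ‖h‖_{1;γ}` and the bound on `‖𝕐 − 𝕏‖_{2γ}`
      (∀ s ∈ Icc (0:ℝ) T, ∀ t ∈ Icc (0:ℝ) T,
        ‖(X t + h t) - (X s + h s) - (X t - X s)‖ ≤ Ch * |t - s| ^ γ) ∧
      (∀ s t : ℝ, 0 ≤ s → s ≤ t → t ≤ T → ∀ i j : Fin d,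
        |(XX s t i j + I1 s t i j + I2 s t i j + I3 s t i j) - XX s t i j| ≤
          M * Ch * (Ch + CX) * (t - s) ^ (2 * γ)) := by
  obtain ⟨hγ1, hγ2⟩ := hγ
  have hγ0 : (0:ℝ) < γ := by linarith
  refine ⟨2, by norm_num, ?_⟩
  intro X XX h Ch CX I1 I2 I3 hCh hCX hX _hChen hvar hI
  -- a general first-level estimate: `‖h t - h s‖ ≤ Ch * (t-s)^γ` for `0 ≤ s ≤ t ≤ T`
  have hhol : ∀ s t : ℝ, 0 ≤ s → s ≤ t → t ≤ T → ‖h t - h s‖ ≤ Ch * (t - s) ^ γ := by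
    intro s t hs hst htT
    have hnn : 0 ≤ Ch * (t - s) ^ γ :=
      mul_nonneg hCh (Real.rpow_nonneg (by linarith) _)
    have hx : t ∈ Icc s t := Set.mem_Icc.mpr ⟨hst, le_rfl⟩
    have hy : s ∈ Icc s t := Set.mem_Icc.mpr ⟨le_rfl, hst⟩
    have h1 : edist (h t) (h s) ≤ ENNReal.ofReal (Ch * (t - s) ^ γ) :=
      (eVariationOn.edist_le h hx hy).trans (hvar s t hs hst htT)
    rw [edist_dist] at h1
    have := (ENNReal.ofReal_le_ofReal_iff hnn).mp h1
    rwa [dist_eq_norm] at this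
  constructor
  · intro s hs t ht
    have hsimp : (X t + h t) - (X s + h s) - (X t - X s) = h t - h s := by abel
    rw [hsimp]
    rcases le_total s t with hst | hst
    · rw [abs_of_nonneg (sub_nonneg.2 hst)]
      exact hhol s t hs.1 hst ht.2
    · rw [abs_of_nonpos (sub_nonpos.2 hst), norm_sub_rev]
      have : -(t - s) = s - t := by ring
      rw [this]
      exact hhol t s ht.1 hst hs.2
  · intro s t hs hst htT i j
    obtain ⟨hRS1, hRS2, hRS3⟩ := hI s t hs hst htT i j
    set A : ℝ := (t - s) ^ γ with hA
    have hA0 : 0 ≤ A := Real.rpow_nonneg (by linarith) _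
    have hsub : Icc s t ⊆ Icc (0:ℝ) T := Icc_subset_Icc hs htT
    -- coordinatewise Hölder bound for `X` on `[s,t]`
    have hXc : ∀ u v : ℝ, u ∈ Icc s t → v ∈ Icc s t → ∀ k : Fin d,
        |X u k - X v k| ≤ CX * A := by
      intro u v hu hv k
      have h1 : |X u k - X v k| = |(X u - X v) k| := by simp [PiLp.sub_apply]
      have h2 : |(X u - X v) k| ≤ ‖X u - X v‖ := coord_abs_le_norm _ _
      have h3 : ‖X u - X v‖ ≤ CX * |u - v| ^ γ := hX v (hsub hv) u (hsub hu)
      have h4 : |u - v| ≤ t - s := by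
        rw [abs_le]; constructor <;> [linarith [hu.1, hu.2, hv.1, hv.2];
          linarith [hu.1, hu.2, hv.1, hv.2]]
      have h5 : |u - v| ^ γ ≤ A := Real.rpow_le_rpow (abs_nonneg _) h4 hγ0.le
      calc |X u k - X v k| = |(X u - X v) k| := h1
        _ ≤ ‖X u - X v‖ := h2
        _ ≤ CX * |u - v| ^ γ := h3
        _ ≤ CX * A := by nlinarith
    -- coordinatewise bound for increments of `h` from `s`
    have hhc : ∀ u : ℝ, u ∈ Icc s t → ∀ k : Fin d, |h u k - h s k| ≤ Ch * A := by
      intro u hu k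
      have h1 : |h u k - h s k| = |(h u - h s) k| := by simp [PiLp.sub_apply]
      have h2 : ‖h u - h s‖ ≤ Ch * (u - s) ^ γ := hhol s u hs hu.1 (hu.2.trans htT)
      have h3 : (u - s) ^ γ ≤ A :=
        Real.rpow_le_rpow (by linarith [hu.1]) (by linarith [hu.2]) hγ0.le
      calc |h u k - h s k| = |(h u - h s) k| := h1
        _ ≤ ‖h u - h s‖ := coord_abs_le_norm _ _
        _ ≤ Ch * (u - s) ^ γ := h2
        _ ≤ Ch * A := by nlinarith
    have hvar' : eVariationOn h (Icc s t) ≤ ENNReal.ofReal (Ch * A) := hvar s t hs hst htT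
    have hChA : 0 ≤ Ch * A := mul_nonneg hCh hA0
    have hCXA : 0 ≤ CX * A := mul_nonneg hCX hA0
    -- membership of partition points
    have hmem : ∀ {n : ℕ} {p : ℕ → ℝ}, p 0 = s → p n = t → (∀ i < n, p i ≤ p (i + 1)) →
        ∀ {k : ℕ}, k ≤ n → p k ∈ Icc s t := by
      intro n p h0 hn hm k hk
      have hl := pmono hm (Nat.zero_le k) hk
      have hr := pmono hm hk (le_refl n)
      rw [h0] at hl; rw [hn] at hr
      exact Set.mem_Icc.mpr ⟨hl, hr⟩
    -- bound for I1
    have b1 : |I1 s t i j| ≤ (CX * A) * (Ch * A) := by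
      refine rs_abs_le hst hRS1 ?_
      intro n p h0 hn hm
      calc |∑ k ∈ Finset.range n, (X (p k) i - X s i) * (h (p (k + 1)) j - h (p k) j)|
          ≤ ∑ k ∈ Finset.range n, |(X (p k) i - X s i) * (h (p (k + 1)) j - h (p k) j)| :=
            Finset.abs_sum_le_sum_abs _ _
        _ ≤ ∑ k ∈ Finset.range n, (CX * A) * ‖h (p (k + 1)) - h (p k)‖ := by
            refine Finset.sum_le_sum fun k hk => ?_
            rw [Finset.mem_range] at hk
            rw [abs_mul]
            refine mul_le_mul (hXc (p k) s (hmem h0 hn hm hk.le)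
              (Set.mem_Icc.mpr ⟨le_rfl, hst⟩) i) ?_ (abs_nonneg _) hCXA
            have : |h (p (k + 1)) j - h (p k) j| = |(h (p (k + 1)) - h (p k)) j| := by
              simp [PiLp.sub_apply]
            rw [this]
            exact coord_abs_le_norm _ _
        _ = (CX * A) * ∑ k ∈ Finset.range n, ‖h (p (k + 1)) - h (p k)‖ := by
            rw [Finset.mul_sum]
        _ ≤ (CX * A) * (Ch * A) :=
            mul_le_mul_of_nonneg_left (sum_norm_le h hChA hvar' h0 hn hm) hCXA
    -- bound for I3
    have b3 : |I3 s t i j| ≤ (Ch * A) * (Ch * A) := by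
      refine rs_abs_le hst hRS3 ?_
      intro n p h0 hn hm
      calc |∑ k ∈ Finset.range n, (h (p k) i - h s i) * (h (p (k + 1)) j - h (p k) j)|
          ≤ ∑ k ∈ Finset.range n, |(h (p k) i - h s i) * (h (p (k + 1)) j - h (p k) j)| :=
            Finset.abs_sum_le_sum_abs _ _
        _ ≤ ∑ k ∈ Finset.range n, (Ch * A) * ‖h (p (k + 1)) - h (p k)‖ := by
            refine Finset.sum_le_sum fun k hk => ?_
            rw [Finset.mem_range] at hk
            rw [abs_mul]
            refine mul_le_mul (hhc (p k) (hmem h0 hn hm hk.le) i) ?_ (abs_nonneg _) hChA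
            have : |h (p (k + 1)) j - h (p k) j| = |(h (p (k + 1)) - h (p k)) j| := by
              simp [PiLp.sub_apply]
            rw [this]
            exact coord_abs_le_norm _ _
        _ = (Ch * A) * ∑ k ∈ Finset.range n, ‖h (p (k + 1)) - h (p k)‖ := by
            rw [Finset.mul_sum]
        _ ≤ (Ch * A) * (Ch * A) :=
            mul_le_mul_of_nonneg_left (sum_norm_le h hChA hvar' h0 hn hm) hChA
    -- bound for I2, via Abel summation
    have b2 : |I2 s t i j| ≤ (CX * A) * (Ch * A) := by
      refine rs_abs_le hst hRS2 ?_
      intro n p h0 hn hm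
      have habel : ∑ k ∈ Finset.range n, (h (p k) i - h s i) * (X (p (k + 1)) j - X (p k) j)
          = ∑ k ∈ Finset.range n,
              ((h (p (k + 1)) i - h s i) - (h (p k) i - h s i)) * (X (p n) j - X (p (k + 1)) j) :=
        abel_sum (fun k => h (p k) i - h s i) (fun k => X (p k) j) n (by simp [h0])
      calc |∑ k ∈ Finset.range n, (h (p k) i - h s i) * (X (p (k + 1)) j - X (p k) j)|
          = |∑ k ∈ Finset.range n,
              ((h (p (k + 1)) i - h s i) - (h (p k) i - h s i)) * (X (p n) j - X (p (k + 1)) j)| := by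
            rw [habel]
        _ ≤ ∑ k ∈ Finset.range n,
              |((h (p (k + 1)) i - h s i) - (h (p k) i - h s i)) * (X (p n) j - X (p (k + 1)) j)| :=
            Finset.abs_sum_le_sum_abs _ _
        _ ≤ ∑ k ∈ Finset.range n, ‖h (p (k + 1)) - h (p k)‖ * (CX * A) := by
            refine Finset.sum_le_sum fun k hk => ?_
            rw [Finset.mem_range] at hk
            rw [abs_mul]
            refine mul_le_mul ?_ (hXc (p n) (p (k + 1)) (hmem h0 hn hm le_rfl)
              (hmem h0 hn hm hk) j) (abs_nonneg _) (norm_nonneg _)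
            have heq : (h (p (k + 1)) i - h s i) - (h (p k) i - h s i)
                = (h (p (k + 1)) - h (p k)) i := by simp [PiLp.sub_apply]
            rw [heq]
            exact coord_abs_le_norm _ _
        _ = (∑ k ∈ Finset.range n, ‖h (p (k + 1)) - h (p k)‖) * (CX * A) := by
            rw [Finset.sum_mul]
        _ ≤ (Ch * A) * (CX * A) :=
            mul_le_mul_of_nonneg_right (sum_norm_le h hChA hvar' h0 hn hm) hCXA
        _ = (CX * A) * (Ch * A) := by ring
    -- put things together
    have hAA : (t - s) ^ (2 * γ) = A * A := by
      rw [two_mul, Real.rpow_add' (by linarith) (by positivity)]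
    have hsimp : (XX s t i j + I1 s t i j + I2 s t i j + I3 s t i j) - XX s t i j
        = I1 s t i j + I2 s t i j + I3 s t i j := by ring
    rw [hsimp, hAA]
    have htri : |I1 s t i j + I2 s t i j + I3 s t i j|
        ≤ |I1 s t i j| + |I2 s t i j| + |I3 s t i j| := by
      calc |I1 s t i j + I2 s t i j + I3 s t i j|
          ≤ |I1 s t i j + I2 s t i j| + |I3 s t i j| := abs_add_le _ _
        _ ≤ |I1 s t i j| + |I2 s t i j| + |I3 s t i j| := by
            linarith [abs_add_le (I1 s t i j) (I2 s t i j)]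
    nlinarith [mul_nonneg hA0 hA0, mul_nonneg hCh hCX, sq_nonneg Ch]
end
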